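/- arXiv:0705.2058 — 12 statements merged into one kernel-verified Lean document; each statement's English description precedes it below -/
import Mathlib

section
/- Every poset P has a dense subset D such that no element of D lies below |P|-many elements of D (i.e., every poset of cardinality κ is almost κ^op-like). -/
open Cardinal

/-- A subset `D` of a poset is `κ`-op-like if no element of `D` lies (strictly)
below `κ`-many elements of `D`. -/
def OpLike {α : Type u} [Preorder α] (D : Set α) (κ : Cardinal.{u}) : Prop :=
  ∀ d ∈ D, #{e : α // e ∈ D ∧ d < e} < κ

/-- Every poset `P` has a dense subset `D` (every element of `P` has a lower bound in `D`)
such that no element of `D` lies below `|P|`-many elements of `D`; i.e. every poset of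
cardinality `κ` is almost `κ`-op-like. -/
theorem every_poset_almost_card_op_like {α : Type u} [PartialOrder α] :
    ∃ D : Set α, (∀ p : α, ∃ d ∈ D, d ≤ p) ∧ OpLike D #α := by
  obtain ⟨r, wo, hr⟩ := Cardinal.ord_eq α
  haveI := wo
  have wf : WellFounded r := wo.wf
  let D : α → Prop := wf.fix (fun p IH => ∀ q, ∀ h : r q p, ¬ (IH q h ∧ q ≤ p))
  have hD : ∀ p, D p ↔ ∀ q, r q p → ¬ (D q ∧ q ≤ p) := by
    intro p
    exact Iff.of_eq (wf.fix_eq (fun p IH => ∀ q, ∀ h : r q p, ¬ (IH q h ∧ q ≤ p)) p)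
  refine ⟨{p | D p}, ?_, ?_⟩
  · intro p
    by_cases hp : D p
    · exact ⟨p, hp, le_refl p⟩
    · rw [hD] at hp
      push_neg at hp
      obtain ⟨q, _, hDq, hle⟩ := hp
      exact ⟨q, hDq, hle⟩
  · intro d hd
    have key : ∀ e : α, e ∈ {p | D p} ∧ d < e → r e d := by
      rintro e ⟨he, hde⟩
      rcases trichotomous_of r e d with h | h | h
      · exact h
      · exact absurd h (ne_of_gt hde)
      · exact absurd (And.intro hd hde.le) ((hD e).1 he d h)
    calc #{e : α // e ∈ {p | D p} ∧ d < e} ≤ #{e : α // r e d} :=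
          Cardinal.mk_subtype_le_of_subset key
      _ = (Ordinal.typein r d).card := Ordinal.card_typein d
      _ < #α := Cardinal.lt_ord.1 (hr ▸ Ordinal.typein_lt_type r d)
end

section
/- Let κ be a cardinal and let P and Q be mutually dense subsets of a common poset. Then P has a κ^op-like dense subset if and only if Q does. -/
open Cardinal

/-- `P` is almost `κ`-op-like: it has a dense subset `D` (every element of `P` has a
lower bound in `D`) in which no element lies (strictly) below `κ`-many elements. -/
def AlmostOpLike {α : Type u} [Preorder α] (P : Set α) (κ : Cardinal.{u}) : Prop :=
  ∃ D ⊆ P, (∀ p ∈ P, ∃ d ∈ D, d ≤ p) ∧ ∀ d ∈ D, #{e : α // e ∈ D ∧ d < e} < κ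

theorem almostOpLike_of_mutually_dense {α : Type u} [PartialOrder α]
    (κ : Cardinal.{u}) (P Q : Set α)
    (hPQ : ∀ p₀ ∈ P, ∃ q₁ ∈ Q, q₁ ≤ p₀) (hQP : ∀ q₀ ∈ Q, ∃ p₁ ∈ P, p₁ ≤ q₀) :
    AlmostOpLike P κ → AlmostOpLike Q κ := by
  rintro ⟨D, hDP, hdense, hlike⟩
  choose f hfQ hfle using fun d : D => hPQ d (hDP d.2)
  refine ⟨Set.range f, ?_, ?_, ?_⟩
  · rintro _ ⟨d, rfl⟩; exact hfQ d
  · intro q hq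
    obtain ⟨p, hp, hpq⟩ := hQP q hq
    obtain ⟨d, hd, hdp⟩ := hdense p hp
    exact ⟨f ⟨d, hd⟩, ⟨⟨d, hd⟩, rfl⟩, le_trans (hfle ⟨d, hd⟩) (le_trans hdp hpq)⟩
  · rintro _ ⟨d₀, rfl⟩
    obtain ⟨p, hp, hple⟩ := hQP (f d₀) (hfQ d₀)
    obtain ⟨d', hd', hle'⟩ := hdense p hp
    have hd'le : d' ≤ f d₀ := le_trans hle' hple
    refine lt_of_le_of_lt ?_ (hlike d' hd')
    have hx : ∀ x : {e : α // e ∈ Set.range f ∧ f d₀ < e}, ∃ d : D, f d = x.1 := by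
      rintro ⟨x, ⟨d, rfl⟩, hxx⟩; exact ⟨d, rfl⟩
    choose g hg using hx
    refine Cardinal.mk_le_of_injective
      (f := fun x => ⟨(g x : α), (g x).2, ?_⟩) ?_
    · calc d' ≤ f d₀ := hd'le
        _ < x.1 := x.2.2
        _ = f (g x) := (hg x).symm
        _ ≤ (g x : α) := hfle (g x)
    · intro x y hxy
      have h1 := congrArg (Subtype.val (p := fun e => e ∈ D ∧ d' < e)) hxy
      simp only at h1
      have h2 : g x = g y := Subtype.ext h1
      exact Subtype.ext ((hg x).symm.trans ((congrArg f h2).trans (hg y)))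

/-- If `P` and `Q` are mutually dense subsets of a common poset, then `P` has a
`κ`-op-like dense subset iff `Q` does. -/
theorem almostOpLike_iff_of_mutually_dense {α : Type u} [PartialOrder α]
    (κ : Cardinal.{u}) (P Q : Set α)
    (hPQ : ∀ p₀ ∈ P, ∃ q₁ ∈ Q, q₁ ≤ p₀) (hQP : ∀ q₀ ∈ Q, ∃ p₁ ∈ P, p₁ ≤ q₀) :
    AlmostOpLike P κ ↔ AlmostOpLike Q κ := by
  exact ⟨almostOpLike_of_mutually_dense κ P Q hPQ hQP, almostOpLike_of_mutually_dense κ Q P hQP hPQ⟩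
end

section
/- If X is a topological space and A is a base of X such that no member of A is contained in weight(X)⁺-many members of A, then A has cardinality at most weight(X). -/
open Cardinal TopologicalSpace

/-- The weight of a space: the least infinite cardinality of a base. -/
noncomputable def weight (X : Type u) [TopologicalSpace X] : Cardinal.{u} :=
  sInf {c | ∃ B : Set (Set X), IsTopologicalBasis B ∧ c = max #B ℵ₀}

/-- If `A` is a base of `X` such that no member of `A` is (strictly) contained in
`weight(X)⁺`-many members of `A`, then `|A| ≤ weight(X)`. -/
theorem card_base_le_weight_of_op_like {X : Type u} [TopologicalSpace X]
    (A : Set (Set X)) (hA : IsTopologicalBasis A)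
    (hop : ∀ U ∈ A, #{V : Set X // V ∈ A ∧ U ⊂ V} < Order.succ (weight X)) :
    #A ≤ weight X := by
  classical
  set κ := weight X with hκdef
  have hmem : κ ∈ {c | ∃ B : Set (Set X), IsTopologicalBasis B ∧ c = max #B ℵ₀} :=
    csInf_mem ⟨max #A ℵ₀, A, hA, rfl⟩
  obtain ⟨B, hB, hw⟩ := hmem
  have hℵ : ℵ₀ ≤ κ := hw ▸ le_max_right _ _
  have hBκ : #B ≤ κ := hw ▸ le_max_left _ _
  -- choice function
  let c : Set X × Set X → Set X := fun p =>
    if h : ∃ U, U ∈ A ∧ p.1 ⊆ U ∧ U ⊆ p.2 then h.choose else Set.univ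
  have hc : ∀ p, (∃ U, U ∈ A ∧ p.1 ⊆ U ∧ U ⊆ p.2) →
      c p ∈ A ∧ p.1 ⊆ c p ∧ c p ⊆ p.2 := by
    intro p h
    simp only [c, dif_pos h]
    exact h.choose_spec
  -- bound on supersets of a member of A
  have hsup : ∀ W : Set X, W ∈ A → #{U : Set X | U ∈ A ∧ W ⊆ U} ≤ κ := by
    intro W hW
    have hsub : {U : Set X | U ∈ A ∧ W ⊆ U} ⊆ insert W {U : Set X | U ∈ A ∧ W ⊂ U} := by
      intro U ⟨hUA, hWU⟩
      rcases eq_or_ne U W with rfl | hne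
      · exact Set.mem_insert _ _
      · exact Set.mem_insert_of_mem _ ⟨hUA, ssubset_of_ne_of_subset (Ne.symm hne) hWU⟩
    calc #{U : Set X | U ∈ A ∧ W ⊆ U} ≤ #(insert W {U : Set X | U ∈ A ∧ W ⊂ U} : Set (Set X)) :=
          mk_le_mk_of_subset hsub
      _ ≤ #{U : Set X | U ∈ A ∧ W ⊂ U} + 1 := mk_insert_le
      _ ≤ κ + 1 := by
          gcongr
          have := hop W hW
          rw [Order.lt_succ_iff] at this
          exact this
      _ ≤ κ := by
          have : κ + 1 ≤ κ + κ := by gcongr; exact one_le_aleph0.trans hℵ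
          simpa [Cardinal.add_eq_self hℵ] using this
  -- the union
  let f : ↥B × ↥B → Set (Set X) := fun p => {U : Set X | U ∈ A ∧ c (↑p.1, ↑p.2) ⊆ U}
  have hcover : A ⊆ (⋃ p, f p) ∪ {∅} := by
    intro U hU
    rcases eq_or_ne U ∅ with rfl | hne
    · exact Or.inr rfl
    · left
      obtain ⟨x, hx⟩ := Set.nonempty_iff_ne_empty.2 hne
      obtain ⟨B2, hB2, hxB2, hB2U⟩ := hB.exists_subset_of_mem_open hx (hA.isOpen hU)
      obtain ⟨U', hU', hxU', hU'B2⟩ := hA.exists_subset_of_mem_open hxB2 (hB.isOpen hB2)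
      obtain ⟨B1, hB1, hxB1, hB1U'⟩ := hB.exists_subset_of_mem_open hxU' (hA.isOpen hU')
      have hex : ∃ V, V ∈ A ∧ B1 ⊆ V ∧ V ⊆ B2 := ⟨U', hU', hB1U', hU'B2⟩
      have hcp := hc (B1, B2) hex
      exact Set.mem_iUnion.2 ⟨(⟨B1, hB1⟩, ⟨B2, hB2⟩), hU, hcp.2.2.trans hB2U⟩
  have hf : ∀ p, #(f p) ≤ κ := by
    intro p
    by_cases h : ∃ U, U ∈ A ∧ (↑p.1 : Set X) ⊆ U ∧ U ⊆ (↑p.2 : Set X)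
    · exact hsup _ (hc (↑p.1, ↑p.2) h).1
    · have : c (↑p.1, ↑p.2) = Set.univ := dif_neg h
      have hsub : f p ⊆ {Set.univ} := by
        intro U ⟨hUA, hcu⟩
        simp only [this] at hcu
        exact Set.eq_univ_of_univ_subset hcu
      exact (mk_le_mk_of_subset hsub).trans (by simpa using one_le_aleph0.trans hℵ)
  have hUnion : #(⋃ p, f p) ≤ κ := by
    calc #(⋃ p, f p) ≤ #(↥B × ↥B) * ⨆ p, #(f p) := mk_iUnion_le f
      _ ≤ κ * κ := by
          apply mul_le_mul'
          · rw [mk_prod]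
            simpa using mul_le_mul' (hBκ.trans (le_max_left κ κ)) (hBκ.trans (le_max_left κ κ))
              |>.trans (by rw [max_self]; exact (mul_eq_self hℵ).le)
          · exact ciSup_le' hf
      _ = κ := mul_eq_self hℵ
  calc #A ≤ #((⋃ p, f p) ∪ {∅} : Set (Set X)) := mk_le_mk_of_subset hcover
    _ ≤ #(⋃ p, f p) + #({∅} : Set (Set X)) := mk_union_le _ _
    _ ≤ κ + 1 := by
        have h1 : #({∅} : Set (Set X)) = 1 := by simp
        rw [h1]; exact add_le_add hUnion le_rfl
    _ ≤ κ := by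
        have : κ + 1 ≤ κ + κ := by gcongr; exact one_le_aleph0.trans hℵ
        simpa [Cardinal.add_eq_self hℵ] using this
end

section
/- Suppose a point p in a topological space X satisfies πχ(p,X) < cf(κ) = κ ≤ χ(p,X). Then X has no base B such that every member of B is contained in fewer than κ-many members of B; i.e., the Noetherian type of X exceeds κ. -/
open Cardinal TopologicalSpace

variable {X : Type u} [TopologicalSpace X]

/-- `B` is a local base at `p`. -/
def IsLocalBase (p : X) (B : Set (Set X)) : Prop :=
  (∀ u ∈ B, IsOpen u ∧ p ∈ u) ∧ ∀ v : Set X, IsOpen v → p ∈ v → ∃ u ∈ B, u ⊆ v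

/-- `B` is a local π-base at `p`: a family of nonempty open sets such that every
open neighborhood of `p` contains a member. -/
def IsLocalPiBase (p : X) (B : Set (Set X)) : Prop :=
  (∀ u ∈ B, IsOpen u ∧ u.Nonempty) ∧ ∀ v : Set X, IsOpen v → p ∈ v → ∃ u ∈ B, u ⊆ v

/-- The π-character of `p` in `X`: least infinite cardinality of a local π-base at `p`. -/
noncomputable def piChar (p : X) : Cardinal.{u} :=
  sInf {c | ∃ B : Set (Set X), IsLocalPiBase p B ∧ c = max #B ℵ₀}

/-- The character of `p` in `X`: least infinite cardinality of a local base at `p`. -/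
noncomputable def charPt (p : X) : Cardinal.{u} :=
  sInf {c | ∃ B : Set (Set X), IsLocalBase p B ∧ c = max #B ℵ₀}

/-!
The members of a base `B` that contain `p` form a local base at `p`, so there are at least
`κ` of them. Each contains a member of a local π-base `A` with `|A| < cf κ`, so by the
pigeonhole principle some `a ∈ A` lies in `κ` of them. A basic set `V ⊆ a` is then strictly
contained in all but at most one of these, i.e. in `κ` members of `B`.
-/

theorem exists_isLocalPiBase_max_eq_piChar (p : X) :
    ∃ A : Set (Set X), IsLocalPiBase p A ∧ max #A ℵ₀ = piChar p := by
  have hne : {c | ∃ A : Set (Set X), IsLocalPiBase p A ∧ c = max #A ℵ₀}.Nonempty :=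
    ⟨_, {v | IsOpen v ∧ v.Nonempty}, ⟨fun _ hu => hu, fun v hv hpv => ⟨v, ⟨hv, p, hpv⟩, le_rfl⟩⟩,
      rfl⟩
  obtain ⟨A, hA, hAeq⟩ := csInf_mem hne
  exact ⟨A, hA, hAeq.symm⟩

theorem aleph0_le_piChar (p : X) : ℵ₀ ≤ piChar p := by
  obtain ⟨A, -, hA⟩ := exists_isLocalPiBase_max_eq_piChar p
  exact hA ▸ le_max_right _ _

theorem exists_isLocalPiBase_mk_le_piChar (p : X) :
    ∃ A : Set (Set X), IsLocalPiBase p A ∧ #A ≤ piChar p := by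
  obtain ⟨A, hA, hAeq⟩ := exists_isLocalPiBase_max_eq_piChar p
  exact ⟨A, hA, hAeq ▸ le_max_left _ _⟩

theorem IsLocalBase.le_mk_of_le_charPt {p : X} {L : Set (Set X)} {κ : Cardinal.{u}}
    (hL : IsLocalBase p L) (hκ : ℵ₀ < κ) (hκχ : κ ≤ charPt p) : κ ≤ #L := by
  have hχ : charPt p ≤ max #L ℵ₀ := csInf_le' ⟨L, hL, rfl⟩
  exact (le_max_iff.mp (hκχ.trans hχ)).resolve_right hκ.not_ge

theorem TopologicalSpace.IsTopologicalBasis.isLocalBase_setOf_mem {B : Set (Set X)}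
    (hB : IsTopologicalBasis B) (p : X) : IsLocalBase p {U | U ∈ B ∧ p ∈ U} := by
  refine ⟨fun U hU => ⟨hB.isOpen hU.1, hU.2⟩, fun v hv hpv => ?_⟩
  obtain ⟨U, hUB, hpU, hUv⟩ := hB.exists_subset_of_mem_open hpv hv
  exact ⟨U, ⟨hUB, hpU⟩, hUv⟩

theorem IsLocalPiBase.exists_le_mk_supersets {p : X} {A L : Set (Set X)} {κ : Cardinal.{u}}
    (hA : IsLocalPiBase p A) (hL : IsLocalBase p L) (hAκ : #A < κ.ord.cof) (hκ : ℵ₀ ≤ κ)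
    (hκL : κ ≤ #L) : ∃ a ∈ A, κ ≤ #{U | U ∈ L ∧ a ⊆ U} := by
  have hsel : ∀ U : L, ∃ a : A, (a : Set X) ⊆ U := fun ⟨U, hU⟩ =>
    let ⟨a, ha, haU⟩ := hA.2 U (hL.1 U hU).1 (hL.1 U hU).2
    ⟨⟨a, ha⟩, haU⟩
  choose f hf using hsel
  obtain ⟨a, ha⟩ := infinite_pigeonhole_card f κ hκL hκ hAκ
  refine ⟨a, a.2, ha.trans ?_⟩
  rw [← mk_image_eq Subtype.val_injective]
  refine mk_le_mk_of_subset ?_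
  rintro _ ⟨U, hU, rfl⟩
  exact ⟨U.2, hU ▸ hf U⟩

theorem le_mk_sdiff_singleton {α : Type u} {s : Set α} {κ : Cardinal.{u}} (hκ : ℵ₀ ≤ κ)
    (hκs : κ ≤ #s) (x : α) : κ ≤ #(s \ {x} : Set α) := by
  by_contra! h
  have hle : #s ≤ #(s \ {x} : Set α) + 1 := by
    simpa only [mk_singleton] using le_mk_sdiff_add_mk s {x}
  exact (hκs.trans hle).not_gt (add_lt_of_lt hκ h (one_lt_aleph0.trans_le hκ))

theorem TopologicalSpace.IsTopologicalBasis.exists_le_mk_ssupersets {B : Set (Set X)}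
    {a : Set X} {κ : Cardinal.{u}} (hB : IsTopologicalBasis B) (ha : IsOpen a ∧ a.Nonempty)
    (hκ : ℵ₀ ≤ κ) (hκa : κ ≤ #{U | U ∈ B ∧ a ⊆ U}) :
    ∃ V ∈ B, κ ≤ #{W | W ∈ B ∧ V ⊂ W} := by
  obtain ⟨x, hx⟩ := ha.2
  obtain ⟨V, hVB, -, hVa⟩ := hB.exists_subset_of_mem_open hx ha.1
  refine ⟨V, hVB, (le_mk_sdiff_singleton hκ hκa V).trans (mk_le_mk_of_subset ?_)⟩
  rintro U ⟨⟨hUB, haU⟩, hUV⟩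
  exact ⟨hUB, (hVa.trans haU).ssubset_of_ne (Ne.symm hUV)⟩

theorem no_op_like_base_of_piChar_lt_char_general (p : X) (κ : Cardinal.{u})
    (h₁ : piChar p < κ.ord.cof) (h₃ : κ ≤ charPt p) :
    ¬ ∃ B : Set (Set X), IsTopologicalBasis B ∧
        ∀ U ∈ B, #{V : Set X // V ∈ B ∧ U ⊂ V} < κ := by
  rintro ⟨B, hB, hop⟩
  have hκ : ℵ₀ < κ := ((aleph0_le_piChar p).trans_lt h₁).trans_le (Ordinal.cof_ord_le κ)
  obtain ⟨A, hA, hAχ⟩ := exists_isLocalPiBase_mk_le_piChar p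
  have hL := hB.isLocalBase_setOf_mem p
  obtain ⟨a, haA, ha⟩ :=
    hA.exists_le_mk_supersets hL (hAχ.trans_lt h₁) hκ.le (hL.le_mk_of_le_charPt hκ h₃)
  obtain ⟨V, hVB, hV⟩ := hB.exists_le_mk_ssupersets (hA.1 a haA) hκ.le
    (ha.trans (mk_le_mk_of_subset fun U hU => ⟨hU.1.1, hU.2⟩))
  exact (hop V hVB).not_ge hV

/-- If `πχ(p,X) < cf κ = κ ≤ χ(p,X)`, then `X` has no `κ`-op-like base:
the Noetherian type of `X` exceeds `κ`. -/
theorem no_op_like_base_of_piChar_lt_char (p : X) (κ : Cardinal.{u})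
    (h₁ : piChar p < κ.ord.cof) (h₂ : κ.ord.cof = κ) (h₃ : κ ≤ charPt p) :
    ¬ ∃ B : Set (Set X), IsTopologicalBasis B ∧
        ∀ U ∈ B, #{V : Set X // V ∈ B ∧ U ⊂ V} < κ :=
  no_op_like_base_of_piChar_lt_char_general p κ h₁ h₃
end

section
/- If X is a space with π-weight strictly less than cf(κ) and κ ≤ weight(X), then X has no κ^op-like base (hence Nt(X) > κ). -/
open Cardinal TopologicalSpace

/-- `B` is a π-base of `X`: a family of nonempty open sets such that every nonempty
open set contains a member. -/
def IsPiBase (X : Type u) [TopologicalSpace X] (B : Set (Set X)) : Prop :=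
  (∀ u ∈ B, IsOpen u ∧ u.Nonempty) ∧ ∀ v : Set X, IsOpen v → v.Nonempty → ∃ u ∈ B, u ⊆ v

/-- The π-weight of a space: the least infinite cardinality of a π-base. -/
noncomputable def piWeight (X : Type u) [TopologicalSpace X] : Cardinal.{u} :=
  sInf {c | ∃ B : Set (Set X), IsPiBase X B ∧ c = max #B ℵ₀}

/-- If `πw(X) < cf κ` and `κ ≤ w(X)`, then `X` has no `κ`-op-like base, so `Nt(X) > κ`. -/
theorem no_op_like_base_of_piWeight_lt {X : Type u} [TopologicalSpace X] (κ : Cardinal.{u})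
    (h₁ : piWeight X < κ.ord.cof) (h₂ : κ ≤ weight X) :
    ¬ ∃ B : Set (Set X), IsTopologicalBasis B ∧
        ∀ U ∈ B, #{V : Set X // V ∈ B ∧ U ⊂ V} < κ := by
  rintro ⟨B, hB, hκ⟩
  classical
  -- the set defining piWeight is nonempty, so the infimum is attained
  have hne : {c | ∃ P : Set (Set X), IsPiBase X P ∧ c = max #P ℵ₀}.Nonempty :=
    ⟨_, {u | IsOpen u ∧ u.Nonempty}, ⟨fun u hu => hu,
      fun v hv hv' => ⟨v, ⟨hv, hv'⟩, subset_rfl⟩⟩, rfl⟩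
  obtain ⟨P, hP, hPeq⟩ : ∃ P : Set (Set X), IsPiBase X P ∧ piWeight X = max #P ℵ₀ :=
    csInf_mem hne
  have hPlt : #P < κ.ord.cof := lt_of_le_of_lt (le_max_left _ _) (hPeq ▸ h₁)
  have hℵκ : ℵ₀ < κ :=
    lt_of_lt_of_le (lt_of_le_of_lt (le_max_right #P ℵ₀) (hPeq ▸ h₁)) (Ordinal.cof_ord_le κ)
  have hℵκ' : ℵ₀ ≤ κ := hℵκ.le
  -- for each p ∈ P choose a basis element inside p
  have hchoice : ∀ p : P, ∃ U, U ∈ B ∧ U ⊆ (p : Set X) := by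
    rintro ⟨p, hp⟩
    obtain ⟨ho, x, hx⟩ := hP.1 p hp
    obtain ⟨U, hU, _, hUp⟩ := hB.exists_subset_of_mem_open hx ho
    exact ⟨U, hU, hUp⟩
  choose Up hUpB hUpp using hchoice
  -- each "cone above p" is small
  set T : P → Set (Set X) := fun p => {U | U ∈ B ∧ (p : Set X) ⊆ U} with hT
  have hTlt : ∀ p : P, #(T p) < κ := by
    intro p
    have hsub : T p ⊆ insert (Up p) {V | V ∈ B ∧ Up p ⊂ V} := by
      rintro U ⟨hUB, hpU⟩
      rcases eq_or_ne (Up p) U with h | h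
      · exact Or.inl h.symm
      · exact Or.inr ⟨hUB, lt_of_le_of_ne ((hUpp p).trans hpU) h⟩
    calc #(T p) ≤ #(insert (Up p) {V | V ∈ B ∧ Up p ⊂ V} : Set (Set X)) :=
          Cardinal.mk_le_mk_of_subset hsub
      _ ≤ #{V | V ∈ B ∧ Up p ⊂ V} + 1 := Cardinal.mk_insert_le
      _ < κ := Cardinal.add_lt_of_lt hℵκ' (hκ _ (hUpB p)) (lt_of_le_of_lt Cardinal.one_lt_aleph0.le hℵκ)
  -- nonempty members of B are covered by the cones
  have hcover : {U | U ∈ B ∧ U.Nonempty} ⊆ ⋃ p : P, T p := by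
    rintro U ⟨hUB, hUne⟩
    obtain ⟨p, hpP, hpU⟩ := hP.2 U (hB.isOpen hUB) hUne
    exact Set.mem_iUnion.2 ⟨⟨p, hpP⟩, hUB, hpU⟩
  have hsup : (⨆ p : P, #(T p)) < κ := Ordinal.iSup_lt hPlt hTlt
  have hUn : #(⋃ p : P, T p) < κ := by
    refine lt_of_le_of_lt (Cardinal.mk_iUnion_le _) ?_
    exact Cardinal.mul_lt_of_lt hℵκ' (lt_of_lt_of_le hPlt (Ordinal.cof_ord_le κ)) hsup
  have hNe : #{U | U ∈ B ∧ U.Nonempty} < κ :=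
    lt_of_le_of_lt (Cardinal.mk_le_mk_of_subset hcover) hUn
  -- hence B itself is small
  have hBsub : B ⊆ insert ∅ {U | U ∈ B ∧ U.Nonempty} := by
    intro U hU
    rcases Set.eq_empty_or_nonempty U with h | h
    · exact Or.inl h
    · exact Or.inr ⟨hU, h⟩
  have hBlt : #B < κ := by
    calc #B ≤ #(insert ∅ {U | U ∈ B ∧ U.Nonempty} : Set (Set X)) :=
          Cardinal.mk_le_mk_of_subset hBsub
      _ ≤ #{U | U ∈ B ∧ U.Nonempty} + 1 := Cardinal.mk_insert_le
      _ < κ := Cardinal.add_lt_of_lt hℵκ' hNe (lt_of_le_of_lt Cardinal.one_lt_aleph0.le hℵκ)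
  have hw : weight X ≤ max #B ℵ₀ := csInf_le' ⟨B, hB, rfl⟩
  exact absurd (h₂.trans hw) (not_le.2 (max_lt hBlt hℵκ))
end

section
/- Let B be a free boolean algebra and let M be an elementary submodel of H_θ (for sufficiently large regular θ) with B and its operations in M. Then for every q ∈ B there exists r ∈ B ∩ M such that for all p ∈ B ∩ M, p ≥ q if and only if p ≥ r; in particular r ≥ q. -/
open Cardinal

variable {B : Type u} [BooleanAlgebra B]

/-- The boolean subalgebra of `B` generated by `S`: the smallest subset of `B`
containing `S` and `⊥` and closed under complements and joins. -/
def boolGen (S : Set B) : Set B :=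
  ⋂₀ {T : Set B | S ⊆ T ∧ (⊥ : B) ∈ T ∧ (∀ x ∈ T, xᶜ ∈ T) ∧ ∀ x ∈ T, ∀ y ∈ T, x ⊔ y ∈ T}

/-- `G` is an independent (free) set of generators: every nontrivial finite meet of
generators and complements of generators is nonzero. -/
def IsFreeGens (G : Set B) : Prop :=
  ∀ s t : Finset B, ↑s ⊆ G → ↑t ⊆ G → Disjoint s t →
    s.inf id ⊓ t.inf (·ᶜ) ≠ ⊥

namespace BoolGenAux

lemma subset_gen (S : Set B) : S ⊆ boolGen S :=
  fun _ hx => Set.mem_sInter.2 fun _ hT => hT.1 hx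

lemma bot_mem (S : Set B) : (⊥ : B) ∈ boolGen S :=
  Set.mem_sInter.2 fun _ hT => hT.2.1

lemma compl_mem (S : Set B) {x : B} (hx : x ∈ boolGen S) : xᶜ ∈ boolGen S :=
  Set.mem_sInter.2 fun T hT => hT.2.2.1 x (Set.mem_sInter.1 hx T hT)

lemma sup_mem (S : Set B) {x y : B} (hx : x ∈ boolGen S) (hy : y ∈ boolGen S) :
    x ⊔ y ∈ boolGen S :=
  Set.mem_sInter.2 fun T hT =>
    hT.2.2.2 x (Set.mem_sInter.1 hx T hT) y (Set.mem_sInter.1 hy T hT)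

lemma top_mem (S : Set B) : (⊤ : B) ∈ boolGen S := by
  have := compl_mem S (bot_mem S)
  simpa using this

lemma inf_mem (S : Set B) {x y : B} (hx : x ∈ boolGen S) (hy : y ∈ boolGen S) :
    x ⊓ y ∈ boolGen S := by
  have : x ⊓ y = (xᶜ ⊔ yᶜ)ᶜ := by simp
  rw [this]
  exact compl_mem S (sup_mem S (compl_mem S hx) (compl_mem S hy))

lemma gen_minimal {S T : Set B} (h1 : S ⊆ T) (h2 : (⊥ : B) ∈ T)
    (h3 : ∀ x ∈ T, xᶜ ∈ T) (h4 : ∀ x ∈ T, ∀ y ∈ T, x ⊔ y ∈ T) :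
    boolGen S ⊆ T :=
  fun _ hx => Set.mem_sInter.1 hx T ⟨h1, h2, h3, h4⟩

lemma gen_mono {S S' : Set B} (h : S ⊆ S') : boolGen S ⊆ boolGen S' :=
  gen_minimal (h.trans (subset_gen S')) (bot_mem S') (fun _ => compl_mem S')
    (fun _ hx _ hy => sup_mem S' hx hy)

lemma finset_sup_mem (S : Set B) {ι : Type*} (u : Finset ι) (f : ι → B)
    (h : ∀ i ∈ u, f i ∈ boolGen S) : u.sup f ∈ boolGen S :=
  Finset.sup_induction (bot_mem S) (fun _ ha _ hb => sup_mem S ha hb) h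

lemma finset_inf_mem (S : Set B) {ι : Type*} (u : Finset ι) (f : ι → B)
    (h : ∀ i ∈ u, f i ∈ boolGen S) : u.inf f ∈ boolGen S :=
  Finset.inf_induction (top_mem S) (fun _ ha _ hb => inf_mem S ha hb) h

lemma exists_finset {S : Set B} {x : B} (hx : x ∈ boolGen S) :
    ∃ F : Finset B, ↑F ⊆ S ∧ x ∈ boolGen (↑F : Set B) := by
  classical
  refine gen_minimal (T := {x : B | ∃ F : Finset B, ↑F ⊆ S ∧ x ∈ boolGen (↑F : Set B)})
    ?_ ?_ ?_ ?_ hx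
  · intro g hg
    exact ⟨{g}, by simpa using hg, subset_gen _ (by simp)⟩
  · exact ⟨∅, by simp, bot_mem _⟩
  · rintro y ⟨F, hF, hy⟩
    exact ⟨F, hF, compl_mem _ hy⟩
  · rintro y ⟨F, hF, hy⟩ z ⟨F', hF', hz⟩
    refine ⟨F ∪ F', by simp [Finset.coe_union, Set.union_subset hF hF'], ?_⟩
    exact sup_mem _
      (gen_mono (by simp [Finset.coe_union]) hy)
      (gen_mono (by simp [Finset.coe_union]) hz)

section Minterms

variable [DecidableEq B]

/-- The minterm over `F` determined by `s ⊆ F`. -/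
def mt (F s : Finset B) : B := s.inf id ⊓ (F \ s).inf (·ᶜ)

lemma mt_le_of_mem {F s : Finset B} {g : B} (hg : g ∈ s) : mt F s ≤ g :=
  inf_le_left.trans (Finset.inf_le hg)

lemma mt_le_compl {F s : Finset B} {g : B} (hg : g ∈ F) (hgs : g ∉ s) : mt F s ≤ gᶜ :=
  inf_le_right.trans (Finset.inf_le (Finset.mem_sdiff.2 ⟨hg, hgs⟩))

lemma sup_mt_powerset (F : Finset B) : F.powerset.sup (mt F) = ⊤ := by
  induction F using Finset.induction_on with
  | empty => simp [mt]
  | @insert a F haF ih =>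
    have h1 : ∀ s ⊆ F, mt (insert a F) s = aᶜ ⊓ mt F s := by
      intro s hsF
      have has : a ∉ s := fun h => haF (hsF h)
      rw [mt, Finset.insert_sdiff_of_notMem _ has, Finset.inf_insert]
      rw [mt, inf_left_comm]
    have h2 : ∀ s ⊆ F, mt (insert a F) (insert a s) = a ⊓ mt F s := by
      intro s hsF
      have has : a ∉ s := fun h => haF (hsF h)
      have hsd : insert a F \ insert a s = F \ s := by
        ext x
        simp only [Finset.mem_sdiff, Finset.mem_insert, not_or]
        constructor
        · rintro ⟨(rfl | hx), hxa, hxs⟩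
          · exact absurd rfl hxa
          · exact ⟨hx, hxs⟩
        · rintro ⟨hx, hxs⟩
          exact ⟨Or.inr hx, fun h => haF (h ▸ hx), hxs⟩
      rw [mt, hsd, Finset.inf_insert, mt, inf_assoc]
      rfl
    rw [Finset.powerset_insert, Finset.sup_union, Finset.sup_image]
    have e1 : F.powerset.sup (mt (insert a F)) = aᶜ ⊓ F.powerset.sup (mt F) := by
      rw [Finset.sup_inf_distrib_left]
      exact Finset.sup_congr rfl fun s hs => h1 s (Finset.mem_powerset.1 hs)
    have e2 : F.powerset.sup (mt (insert a F) ∘ insert a) = a ⊓ F.powerset.sup (mt F) := by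
      rw [Finset.sup_inf_distrib_left]
      exact Finset.sup_congr rfl fun s hs => h2 s (Finset.mem_powerset.1 hs)
    rw [e1, e2, ih]
    simp

lemma mt_inf_mt {F s t : Finset B} (hs : s ⊆ F) (ht : t ⊆ F) (hne : s ≠ t) :
    mt F s ⊓ mt F t = ⊥ := by
  have : ∃ g, (g ∈ s ∧ g ∉ t) ∨ (g ∈ t ∧ g ∉ s) := by
    by_contra h
    push_neg at h
    exact hne (Finset.ext fun g => ⟨fun hg => (h g).1 hg, fun hg => (h g).2 hg⟩)
  obtain ⟨g, ⟨hg1, hg2⟩ | ⟨hg1, hg2⟩⟩ := this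
  · refine le_bot_iff.1 ?_
    calc mt F s ⊓ mt F t ≤ g ⊓ gᶜ :=
          inf_le_inf (mt_le_of_mem hg1) (mt_le_compl (hs hg1) hg2)
      _ = ⊥ := inf_compl_eq_bot
  · refine le_bot_iff.1 ?_
    calc mt F s ⊓ mt F t ≤ gᶜ ⊓ g :=
          inf_le_inf (mt_le_compl (ht hg1) hg2) (mt_le_of_mem hg1)
      _ = ⊥ := compl_inf_eq_bot
  
lemma dnf {F : Finset B} {x : B} (hx : x ∈ boolGen (↑F : Set B)) :
    ∃ A : Finset (Finset B), A ⊆ F.powerset ∧ x = A.sup (mt F) := by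
  refine gen_minimal
    (T := {x : B | ∃ A : Finset (Finset B), A ⊆ F.powerset ∧ x = A.sup (mt F)})
    ?_ ?_ ?_ ?_ hx
  · intro g hgF
    replace hgF : g ∈ F := hgF
    refine ⟨F.powerset.filter (g ∈ ·), Finset.filter_subset _ _, ?_⟩
    refine le_antisymm ?_ (Finset.sup_le fun s hs => mt_le_of_mem (Finset.mem_filter.1 hs).2)
    have hle : g ⊓ F.powerset.sup (mt F) ≤ (F.powerset.filter (g ∈ ·)).sup (mt F) := by
      rw [Finset.sup_inf_distrib_left]
      refine Finset.sup_le fun s hs => ?_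
      by_cases hgs : g ∈ s
      · exact inf_le_right.trans (Finset.le_sup (Finset.mem_filter.2 ⟨hs, hgs⟩))
      · calc g ⊓ mt F s ≤ g ⊓ gᶜ := inf_le_inf_left g (mt_le_compl hgF hgs)
          _ = ⊥ := inf_compl_eq_bot
          _ ≤ _ := bot_le
    simpa [sup_mt_powerset] using hle
  · exact ⟨∅, by simp, by simp⟩
  · rintro y ⟨A, hA, rfl⟩
    refine ⟨F.powerset \ A, Finset.sdiff_subset, ?_⟩
    have hcompl : IsCompl (A.sup (mt F)) ((F.powerset \ A).sup (mt F)) := by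
      refine isCompl_iff.2 ⟨?_, ?_⟩
      · refine Finset.disjoint_sup_left.2 fun s hs => Finset.disjoint_sup_right.2 fun t ht => ?_
        refine disjoint_iff.2 (mt_inf_mt (Finset.mem_powerset.1 (hA hs))
          (Finset.mem_powerset.1 (Finset.mem_sdiff.1 ht).1) ?_)
        rintro rfl
        exact (Finset.mem_sdiff.1 ht).2 hs
      · refine codisjoint_iff.2 ?_
        rw [← Finset.sup_union, Finset.union_sdiff_of_subset hA, sup_mt_powerset]
    exact compl_eq_iff_isCompl.2 hcompl
  · rintro y ⟨A, hA, rfl⟩ z ⟨A', hA', rfl⟩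
    exact ⟨A ∪ A', Finset.union_subset hA hA', (Finset.sup_union).symm⟩

lemma nonbot_ext {G S : Set B} (hfree : IsFreeGens G) (hS : S ⊆ G) {c : B}
    (hc : c ∈ boolGen S) (hc0 : c ≠ ⊥) (u v : Finset B) (hu : ↑u ⊆ G) (hv : ↑v ⊆ G)
    (huS : ∀ x ∈ u, x ∉ S) (hvS : ∀ x ∈ v, x ∉ S) (huv : Disjoint u v) :
    c ⊓ (u.inf id ⊓ v.inf (·ᶜ)) ≠ ⊥ := by
  obtain ⟨F', hF'S, hc'⟩ := exists_finset hc
  obtain ⟨A, hA, rfl⟩ := dnf hc'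
  have hA0 : A.Nonempty := by
    rcases A.eq_empty_or_nonempty with rfl | h
    · simp at hc0
    · exact h
  obtain ⟨s', hs'⟩ := hA0
  have hs'F : s' ⊆ F' := Finset.mem_powerset.1 (hA hs')
  have hkey := hfree (s' ∪ u) ((F' \ s') ∪ v) ?_ ?_ ?_
  · intro h0
    refine hkey ?_
    rw [Finset.inf_union, Finset.inf_union]
    refine le_bot_iff.1 ?_
    calc (s'.inf id ⊓ u.inf id) ⊓ ((F' \ s').inf (·ᶜ) ⊓ v.inf (·ᶜ))
        = mt F' s' ⊓ (u.inf id ⊓ v.inf (·ᶜ)) := by rw [mt]; ac_rfl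
      _ ≤ A.sup (mt F') ⊓ (u.inf id ⊓ v.inf (·ᶜ)) :=
          inf_le_inf_right _ (Finset.le_sup hs')
      _ = ⊥ := h0
  · rw [Finset.coe_union]
    exact Set.union_subset (fun x hx => hS (hF'S (hs'F hx))) hu
  · rw [Finset.coe_union]
    exact Set.union_subset (fun x hx => hS (hF'S (Finset.mem_sdiff.1 hx).1)) hv
  · rw [Finset.disjoint_union_left]
    constructor
    · rw [Finset.disjoint_union_right]
      refine ⟨Finset.disjoint_sdiff, Finset.disjoint_left.2 fun g hg hgv => ?_⟩
      exact hvS g hgv (hF'S (hs'F hg))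
    · rw [Finset.disjoint_union_right]
      refine ⟨Finset.disjoint_left.2 fun g hg hgd => ?_, huv⟩
      exact huS g hg (hF'S (Finset.mem_sdiff.1 hgd).1)

lemma key_lemma {G S : Set B} (hfree : IsFreeGens G) (hS : S ⊆ G)
    [DecidablePred (· ∈ S)] {F s : Finset B}
    (hF : ↑F ⊆ G) (hs : s ⊆ F) {p : B} (hp : p ∈ boolGen S) (hle : mt F s ≤ p) :
    (s.filter (· ∈ S)).inf id ⊓ ((F \ s).filter (· ∈ S)).inf (·ᶜ) ≤ p := by
  by_contra hcon
  set x := (s.filter (· ∈ S)).inf id ⊓ ((F \ s).filter (· ∈ S)).inf (·ᶜ) with hx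
  set c := x ⊓ pᶜ with hc
  have hc0 : c ≠ ⊥ := by
    intro h
    exact hcon (sdiff_eq_bot_iff.1 (by rw [sdiff_eq]; exact h))
  have hcmem : c ∈ boolGen S := by
    refine inf_mem S (inf_mem S ?_ ?_) (compl_mem S hp)
    · exact finset_inf_mem S _ _ fun g hg => subset_gen S (Finset.mem_filter.1 hg).2
    · exact finset_inf_mem S _ _ fun g hg =>
        compl_mem S (subset_gen S (Finset.mem_filter.1 hg).2)
  set u := s.filter (fun g => ¬ g ∈ S) with hu
  set v := (F \ s).filter (fun g => ¬ g ∈ S) with hv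
  have hext := nonbot_ext hfree hS hcmem hc0 u v
    (fun g hg => hF (hs ((Finset.filter_subset _ _) hg)))
    (fun g hg => hF (Finset.mem_sdiff.1 ((Finset.filter_subset _ _) hg)).1)
    (fun g hg => (Finset.mem_filter.1 hg).2)
    (fun g hg => (Finset.mem_filter.1 hg).2)
    (Finset.disjoint_left.2 fun g hg hgv =>
      (Finset.mem_sdiff.1 ((Finset.filter_subset _ _) hgv)).2
        ((Finset.filter_subset _ _) hg))
  refine hext ?_
  have d1 : s.inf id = (s.filter (· ∈ S)).inf id ⊓ u.inf id := by
    rw [hu, ← Finset.inf_union, Finset.filter_union_filter_not_eq]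
  have d2 : (F \ s).inf (·ᶜ) = ((F \ s).filter (· ∈ S)).inf (·ᶜ) ⊓ v.inf (·ᶜ) := by
    rw [hv, ← Finset.inf_union, Finset.filter_union_filter_not_eq]
  have hdec : mt F s ⊓ pᶜ = c ⊓ (u.inf id ⊓ v.inf (·ᶜ)) := by
    rw [hc, hx, mt, d1, d2]
    ac_rfl
  rw [← hdec]
  refine le_bot_iff.1 ?_
  calc mt F s ⊓ pᶜ ≤ p ⊓ pᶜ := inf_le_inf_right _ hle
    _ = ⊥ := inf_compl_eq_bot

end Minterms

end BoolGenAux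

/-- Reflection of cones in a free boolean algebra.  Here `B` is a boolean algebra freely
generated by `G`, and the subalgebra `B ∩ M` determined by an elementary submodel
`M ≺ H_θ` with `B` and its operations in `M` is, by elementarity, the subalgebra
generated by the set `S = G ∩ M` of generators lying in `M`.  For every `q ∈ B` there is
`r` in this subalgebra such that for all `p` in the subalgebra, `p ≥ q ↔ p ≥ r`;
in particular `r ≥ q`. -/
theorem free_boolean_reflects_cones (G : Set B) (hfree : IsFreeGens G)
    (hgen : boolGen G = Set.univ) (S : Set B) (hS : S ⊆ G) (q : B) :
    ∃ r ∈ boolGen S, q ≤ r ∧ ∀ p ∈ boolGen S, (q ≤ p ↔ r ≤ p) := by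
  classical
  open BoolGenAux in
  have hq : q ∈ boolGen G := by rw [hgen]; trivial
  obtain ⟨F, hFG, hqF⟩ := BoolGenAux.exists_finset hq
  obtain ⟨A, hA, rfl⟩ := BoolGenAux.dnf hqF
  set r := A.sup (fun s => (s.filter (· ∈ S)).inf id ⊓ ((F \ s).filter (· ∈ S)).inf (·ᶜ))
    with hr
  have hqr : A.sup (BoolGenAux.mt F) ≤ r := by
    refine Finset.sup_mono_fun fun s hsA => ?_
    exact inf_le_inf (Finset.inf_mono (Finset.filter_subset _ _))
      (Finset.inf_mono (Finset.filter_subset _ _))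
  refine ⟨r, ?_, hqr, ?_⟩
  · refine BoolGenAux.finset_sup_mem S _ _ fun s hsA => ?_
    refine BoolGenAux.inf_mem S ?_ ?_
    · exact BoolGenAux.finset_inf_mem S _ _ fun g hg =>
        BoolGenAux.subset_gen S (Finset.mem_filter.1 hg).2
    · exact BoolGenAux.finset_inf_mem S _ _ fun g hg =>
        BoolGenAux.compl_mem S (BoolGenAux.subset_gen S (Finset.mem_filter.1 hg).2)
  · intro p hp
    refine ⟨fun hqp => ?_, fun hrp => hqr.trans hrp⟩
    refine Finset.sup_le fun s hsA => ?_
    exact BoolGenAux.key_lemma hfree hS hFG (Finset.mem_powerset.1 (hA hsA)) hp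
      ((Finset.le_sup hsA).trans hqp)
end

section
/- Every subset Q of a free boolean algebra B has a dense subset D (dense meaning every element of Q has a lower bound in D within Q) such that every element of D lies below only finitely many elements of D; i.e., every subset of a free boolean algebra is almost ω^op-like. -/
open Cardinal

variable {B : Type u} [BooleanAlgebra B]

/-!
Well-order `B` and attach to each `b` a countable set `S b` of free generators with
`b ∈ ⟨S b⟩` that reflects `Q`: every `v ∈ ⟨S b⟩` above some element of `Q` is above some element
of `Q ∩ ⟨S b⟩`. Rank each element by the first `b` with the element in `⟨S b⟩`. Every rank level
of `Q` is countable, so the elements of `Q` that are minimal for (rank, enumeration of the level),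
lexicographically, among the elements of `Q` below them form a dense `D`, on which the rank
decreases along `≤` and every level has only finitely many elements above a given one.

If `d₀ ∈ D` were below infinitely many `e ∈ D`, interpolation in the free algebra would give
`d₀ ≤ v ≤ e` with `v` generated by the finite support of `d₀` and by `S (rank e)`. Since the support
generates a finite algebra, one `v` serves infinitely many `e`, and reflection puts below `v` an
element of `D` whose rank forces all these `e` into a single level.
-/

open BooleanSubalgebra Set

section Order

variable {α : Type*} [Preorder α]

def IsUpperFinite (D : Set α) : Prop := ∀ d ∈ D, (D ∩ Ici d).Finite

theorem exists_coinitial_of_key {κ : Type*} [LinearOrder κ] [WellFoundedLT κ]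
    (Q : Set α) (key : α → κ) :
    ∃ D ⊆ Q, (∀ q ∈ Q, ∃ d ∈ D, key d ≤ key q ∧ d ≤ q) ∧
      ∀ e ∈ D, ∀ q ∈ Q, q ≤ e → key e ≤ key q := by
  refine ⟨{e ∈ Q | ∀ q ∈ Q, q ≤ e → key e ≤ key q}, fun e he => he.1, fun q hq => ?_,
    fun e he => he.2⟩
  let A := {d ∈ Q | d ≤ q}
  have hqA : q ∈ A := ⟨hq, le_rfl⟩
  obtain ⟨hdQ, hdq⟩ := Function.argminOn_mem key A ⟨q, hqA⟩
  exact ⟨_, ⟨hdQ, fun q' hq' hq'd => Function.argminOn_le key A ⟨hq', hq'd.trans hdq⟩⟩,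
    Function.argminOn_le key A hqA, hdq⟩

theorem exists_coinitial_of_countable_levels {ι : Type*} [LinearOrder ι] [WellFoundedLT ι]
    (Q : Set α) (rank : α → ι) (hQ : ∀ i, {q ∈ Q | rank q = i}.Countable) :
    ∃ D ⊆ Q, (∀ q ∈ Q, ∃ d ∈ D, rank d ≤ rank q ∧ d ≤ q) ∧
      (∀ d ∈ D, ∀ e ∈ D, d ≤ e → rank e ≤ rank d) ∧
      ∀ d ∈ D, (D ∩ Ici d ∩ rank ⁻¹' {rank d}).Finite := by
  choose g hg using fun i => Set.countable_iff_exists_injOn.mp (hQ i)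
  obtain ⟨D, hDQ, hcoinit, hmin⟩ :=
    exists_coinitial_of_key Q fun q => toLex (rank q, g (rank q) q)
  have hkey : ∀ e ∈ D, ∀ d ∈ D, d ≤ e → rank e < rank d ∨
      rank e = rank d ∧ g (rank e) e ≤ g (rank d) d := fun e he d hd hde =>
    Prod.Lex.toLex_le_toLex.mp (hmin e he d (hDQ hd) hde)
  refine ⟨D, hDQ, fun q hq => ?_, fun d hd e he hde => ?_, fun d hd => ?_⟩
  · obtain ⟨d, hd, hkey, hdq⟩ := hcoinit q hq
    exact ⟨d, hd, Prod.Lex.monotone_fst _ _ hkey, hdq⟩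
  · rcases hkey e he d hd hde with h | ⟨h, -⟩
    exacts [h.le, h.le]
  · refine Set.Finite.of_finite_image (f := g (rank d)) ((Set.finite_Iic (g (rank d) d)).subset ?_)
      ((hg (rank d)).mono fun e he => (⟨hDQ he.1.1, he.2⟩ : e ∈ {q ∈ Q | rank q = rank d}))
    rintro _ ⟨e, ⟨⟨he, hde⟩, hrank⟩, rfl⟩
    rcases hkey e he d hd hde with h | ⟨-, h⟩
    · exact absurd (h.trans_eq hrank.symm) (lt_irrefl _)
    · rwa [show rank e = rank d from hrank] at h

end Order

theorem boolGen_subset_closure (S : Set B) : boolGen S ⊆ closure S :=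
  fun _ hx => hx _ ⟨subset_closure, bot_mem, fun _ => compl_mem, fun _ hx _ hy => sup_mem hx hy⟩

theorem inf_sup_compl_inf (a x : B) : a ⊓ x ⊔ aᶜ ⊓ x = x := by
  rw [inf_comm a, inf_comm aᶜ, sup_inf_inf_compl]

namespace BooleanSubalgebra

theorem exists_inf_eq_inf_of_mem_closure {s t : Set B} (c : B)
    (ht : ∀ g ∈ t, ∃ g' ∈ closure s, c ⊓ g = c ⊓ g') {x : B} (hx : x ∈ closure t) :
    ∃ x' ∈ closure s, c ⊓ x = c ⊓ x' := by
  induction hx using closure_bot_sup_induction with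
  | mem g hg => exact ht g hg
  | bot => exact ⟨⊥, bot_mem, rfl⟩
  | sup x _ y _ hx hy =>
    obtain ⟨x', hx', hxx'⟩ := hx
    obtain ⟨y', hy', hyy'⟩ := hy
    exact ⟨x' ⊔ y', sup_mem hx' hy', by rw [inf_sup_left, inf_sup_left, hxx', hyy']⟩
  | compl x _ hx =>
    obtain ⟨x', hx', hxx'⟩ := hx
    exact ⟨x'ᶜ, compl_mem hx', by
      rw [← _root_.sdiff_eq, ← _root_.sdiff_eq, ← sdiff_inf_self_left, hxx', sdiff_inf_self_left]⟩

theorem exists_inf_eq_inf_of_mem_closure_insert {s : Set B} {a x : B}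
    (hx : x ∈ closure (insert a s)) :
    ∃ x₁ ∈ closure s, ∃ x₀ ∈ closure s, a ⊓ x = a ⊓ x₁ ∧ aᶜ ⊓ x = aᶜ ⊓ x₀ := by
  obtain ⟨x₁, hx₁, h₁⟩ := exists_inf_eq_inf_of_mem_closure a (s := s) (by
    rintro g (rfl | hg)
    exacts [⟨⊤, top_mem, by simp⟩, ⟨g, subset_closure hg, rfl⟩]) hx
  obtain ⟨x₀, hx₀, h₀⟩ := exists_inf_eq_inf_of_mem_closure aᶜ (s := s) (by
    rintro g (rfl | hg)
    exacts [⟨⊥, bot_mem, by simp⟩, ⟨g, subset_closure hg, rfl⟩]) hx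
  exact ⟨x₁, hx₁, x₀, hx₀, h₁, h₀⟩

theorem eq_bot_or_eq_top_of_mem_closure_empty {x : B} (hx : x ∈ closure (∅ : Set B)) :
    x = ⊥ ∨ x = ⊤ :=
  mem_bot.mp (closure_le.mpr (empty_subset _) hx)

theorem finite_closure {s : Set B} (hs : s.Finite) : (closure s : Set B).Finite := by
  induction s, hs using Set.Finite.induction_on with
  | empty => exact (Set.toFinite {⊥, ⊤}).subset fun x hx => eq_bot_or_eq_top_of_mem_closure_empty hx
  | @insert a s _ _ ih =>
    refine (ih.image2 (fun x₁ x₀ => a ⊓ x₁ ⊔ aᶜ ⊓ x₀) ih).subset fun x hx => ?_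
    obtain ⟨x₁, hx₁, x₀, hx₀, h₁, h₀⟩ := exists_inf_eq_inf_of_mem_closure_insert hx
    exact ⟨x₁, hx₁, x₀, hx₀, show a ⊓ x₁ ⊔ aᶜ ⊓ x₀ = x by rw [← h₁, ← h₀, inf_sup_compl_inf]⟩

theorem exists_finset_of_mem_closure {s : Set B} {x : B} (hx : x ∈ closure s) :
    ∃ F : Finset B, ↑F ⊆ s ∧ x ∈ closure (F : Set B) := by
  classical
  induction hx using closure_bot_sup_induction with
  | mem g hg => exact ⟨{g}, by simpa using hg, subset_closure (by simp)⟩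
  | bot => exact ⟨∅, by simp, bot_mem⟩
  | sup x _ y _ hx hy =>
    obtain ⟨F, hFs, hxF⟩ := hx
    obtain ⟨H, hHs, hyH⟩ := hy
    refine ⟨F ∪ H, by simp [hFs, hHs], sup_mem ?_ ?_⟩
    · exact closure_mono (by simp) hxF
    · exact closure_mono (by simp) hyH
  | compl x _ hx =>
    obtain ⟨F, hFs, hxF⟩ := hx
    exact ⟨F, hFs, compl_mem hxF⟩

theorem countable_closure {s : Set B} (hs : s.Countable) : (closure s : Set B).Countable := by
  refine ((Set.countable_ofPred_finite_subset hs).biUnion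
    fun t ht => (finite_closure ht.1).countable).mono fun x hx => ?_
  obtain ⟨F, hFs, hxF⟩ := exists_finset_of_mem_closure hx
  exact mem_biUnion ⟨F.finite_toSet, hFs⟩ hxF

theorem exists_mem_closure_of_monotone {T : ℕ → Set B} (hT : Monotone T) {x : B}
    (hx : x ∈ closure (⋃ n, T n)) : ∃ n, x ∈ closure (T n) := by
  obtain ⟨F, hF, hxF⟩ := exists_finset_of_mem_closure hx
  obtain ⟨n, hn⟩ := hT.directed_le.exists_mem_subset_of_finset_subset_biUnion hF
  exact ⟨n, closure_mono hn hxF⟩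

end BooleanSubalgebra

theorem exists_countable_reflecting {G : Set B} (hG : closure G = ⊤) (Q : Set B) (b : B) :
    ∃ S ⊆ G, b ∈ closure S ∧ S.Countable ∧
      IsCoinitialFor (↑(upperClosure Q) ∩ closure S) (Q ∩ closure S) := by
  choose supp hsuppG hsupp using fun x : B =>
    exists_finset_of_mem_closure (hG ▸ mem_top : x ∈ closure G)
  have hw (v : B) : ∃ q, v ∈ upperClosure Q → q ∈ Q ∧ q ≤ v := by
    by_cases hv : v ∈ upperClosure Q
    · obtain ⟨q, hq, hqv⟩ := mem_upperClosure.mp hv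
      exact ⟨q, fun _ => ⟨hq, hqv⟩⟩
    · exact ⟨v, fun h => absurd h hv⟩
  choose w hw using hw
  let step (U : Set B) : Set B :=
    U ∪ ⋃ v ∈ (closure U : Set B) ∩ upperClosure Q, (supp (w v) : Set B)
  let U (n : ℕ) : Set B := step^[n] (supp b)
  have hU_succ (n : ℕ) : U (n + 1) = step (U n) := Function.iterate_succ_apply' _ _ _
  have hU_mono : Monotone U :=
    monotone_nat_of_le_succ fun n => (hU_succ n).symm ▸ subset_union_left
  have hU (n : ℕ) : U n ⊆ G ∧ (U n).Countable := by
    induction n with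
    | zero => exact ⟨hsuppG b, (supp b).countable_toSet⟩
    | succ n ih =>
      rw [hU_succ]
      exact ⟨union_subset ih.1 (iUnion₂_subset fun v _ => hsuppG _),
        ih.2.union (((countable_closure ih.2).mono inter_subset_left).biUnion
          fun v _ => (supp (w v)).countable_toSet)⟩
  refine ⟨⋃ n, U n, iUnion_subset fun n => (hU n).1, closure_mono (subset_iUnion U 0) (hsupp b),
    countable_iUnion fun n => (hU n).2, ?_⟩
  rintro v ⟨hvQ, hv⟩
  obtain ⟨n, hn⟩ := exists_mem_closure_of_monotone hU_mono hv
  obtain ⟨hwQ, hwv⟩ := hw v hvQ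
  refine ⟨w v, ⟨hwQ, closure_mono ?_ (hsupp (w v))⟩, hwv⟩
  calc (supp (w v) : Set B) ⊆ step (U n) :=
        (subset_biUnion_of_mem (u := fun v => (supp (w v) : Set B))
          (show v ∈ (closure (U n) : Set B) ∩ upperClosure Q from ⟨hn, hvQ⟩)).trans
          subset_union_right
    _ = U (n + 1) := (hU_succ n).symm
    _ ⊆ ⋃ n, U n := subset_iUnion U (n + 1)

namespace IsFreeGens

variable {G : Set B}

theorem eq_bot_of_inf_eq_bot (hfree : IsFreeGens G) {K : Finset B} (hK : ↑K ⊆ G)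
    {s t : Finset B} (hs : ↑s ⊆ G) (ht : ↑t ⊆ G) (hst : Disjoint s t)
    (hsK : Disjoint s K) (htK : Disjoint t K) {z : B} (hz : z ∈ closure (K : Set B))
    (h : s.inf id ⊓ t.inf (·ᶜ) ⊓ z = ⊥) : z = ⊥ := by
  classical
  induction K using Finset.induction_on generalizing s t z with
  | empty =>
    rcases eq_bot_or_eq_top_of_mem_closure_empty (by simpa using hz) with rfl | rfl
    · rfl
    · exact absurd (by simpa using h) (hfree s t hs ht hst)
  | @insert b K hbK ih =>
    simp only [Finset.coe_insert, insert_subset_iff] at hK hz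
    simp only [Finset.disjoint_insert_right] at hsK htK
    obtain ⟨hbG, hKG⟩ := hK
    obtain ⟨hbs, hsK⟩ := hsK
    obtain ⟨hbt, htK⟩ := htK
    obtain ⟨z₁, hz₁, z₀, hz₀, h₁, h₀⟩ := exists_inf_eq_inf_of_mem_closure_insert hz
    have hz₁ : z₁ = ⊥ := by
      refine ih hKG (s := insert b s) (by simp [insert_subset_iff, hbG, hs])
        ht (by simp [hbt, hst]) (by simp [hbK, hsK]) htK hz₁ (eq_bot_iff.mpr ?_)
      calc (insert b s).inf id ⊓ t.inf (·ᶜ) ⊓ z₁ = b ⊓ z ⊓ (s.inf id ⊓ t.inf (·ᶜ)) := by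
            rw [h₁, Finset.inf_insert, id]; ac_rfl
        _ ≤ s.inf id ⊓ t.inf (·ᶜ) ⊓ z := by rw [inf_comm]; exact inf_le_inf_left _ inf_le_right
        _ = ⊥ := h
    have hz₀ : z₀ = ⊥ := by
      refine ih hKG (t := insert b t) hs (by simp [insert_subset_iff, hbG, ht])
        (by simp [hbs, hst]) hsK (by simp [hbK, htK]) hz₀ (eq_bot_iff.mpr ?_)
      calc s.inf id ⊓ (insert b t).inf (·ᶜ) ⊓ z₀ = bᶜ ⊓ z ⊓ (s.inf id ⊓ t.inf (·ᶜ)) := by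
            rw [h₀, Finset.inf_insert]; ac_rfl
        _ ≤ s.inf id ⊓ t.inf (·ᶜ) ⊓ z := by rw [inf_comm]; exact inf_le_inf_left _ inf_le_right
        _ = ⊥ := h
    rw [← inf_sup_compl_inf b z, h₁, h₀, hz₁, hz₀]
    simp

theorem le_of_inf_le (hfree : IsFreeGens G) {K : Finset B} (hK : ↑K ⊆ G) {a : B} (ha : a ∈ G)
    (haK : a ∉ K) {z y : B} (hz : z ∈ closure (K : Set B)) (hy : y ∈ closure (K : Set B))
    (h : a ⊓ z ≤ y) : z ≤ y := by
  rw [← sdiff_eq_bot_iff]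
  refine hfree.eq_bot_of_inf_eq_bot hK (s := {a}) (t := ∅) (by simpa using ha) (by simp)
    (by simp) (by simpa using haK) (by simp) (sdiff_mem hz hy) ?_
  simpa [← inf_sdiff_assoc, sdiff_eq_bot_iff] using h

theorem le_of_compl_inf_le (hfree : IsFreeGens G) {K : Finset B} (hK : ↑K ⊆ G) {a : B}
    (ha : a ∈ G) (haK : a ∉ K) {z y : B} (hz : z ∈ closure (K : Set B))
    (hy : y ∈ closure (K : Set B)) (h : aᶜ ⊓ z ≤ y) : z ≤ y := by
  rw [← sdiff_eq_bot_iff]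
  refine hfree.eq_bot_of_inf_eq_bot hK (s := ∅) (t := {a}) (by simp) (by simpa using ha)
    (by simp) (by simp) (by simpa using haK) (sdiff_mem hz hy) ?_
  simpa [← inf_sdiff_assoc, sdiff_eq_bot_iff] using h

theorem exists_interpolant_finset (hfree : IsFreeGens G) {F H : Finset B} (hF : ↑F ⊆ G)
    (hH : ↑H ⊆ G) {x y : B} (hx : x ∈ closure (F : Set B)) (hy : y ∈ closure (H : Set B))
    (hxy : x ≤ y) : ∃ r ∈ closure ((F : Set B) ∩ H), x ≤ r ∧ r ≤ y := by
  classical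
  induction F using Finset.induction_on generalizing x y with
  | empty => exact ⟨x, by simpa using hx, le_rfl, hxy⟩
  | @insert a F haF ih =>
    simp only [Finset.coe_insert, insert_subset_iff] at hF hx ⊢
    obtain ⟨haG, hFG⟩ := hF
    obtain ⟨x₁, hx₁, x₀, hx₀, h₁, h₀⟩ := exists_inf_eq_inf_of_mem_closure_insert hx
    have hx_eq : x = a ⊓ x₁ ⊔ aᶜ ⊓ x₀ := by rw [← h₁, ← h₀, inf_sup_compl_inf]
    have hx₁y : a ⊓ x₁ ≤ y := h₁ ▸ inf_le_right.trans hxy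
    have hx₀y : aᶜ ⊓ x₀ ≤ y := h₀ ▸ inf_le_right.trans hxy
    have hmono : closure ((F : Set B) ∩ H) ≤ closure (insert a (F : Set B) ∩ H) :=
      closure_mono (inter_subset_inter_left _ (subset_insert _ _))
    by_cases haH : a ∈ H
    · -- `a` is shared, so interpolate separately below `a` and below `aᶜ`
      have ha : a ∈ closure (insert a (F : Set B) ∩ H) := subset_closure ⟨mem_insert _ _, haH⟩
      obtain ⟨r₁, hr₁, hxr₁, hr₁y⟩ := ih hFG hx₁
        (himp_mem (subset_closure haH) hy) (le_himp_iff.mpr (inf_comm x₁ a ▸ hx₁y))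
      obtain ⟨r₀, hr₀, hxr₀, hr₀y⟩ := ih hFG hx₀
        (himp_mem (compl_mem (subset_closure haH)) hy) (le_himp_iff.mpr (inf_comm x₀ aᶜ ▸ hx₀y))
      refine ⟨a ⊓ r₁ ⊔ aᶜ ⊓ r₀, sup_mem (inf_mem ha (hmono hr₁))
        (inf_mem (compl_mem ha) (hmono hr₀)), ?_, sup_le ?_ ?_⟩
      · rw [hx_eq]
        exact sup_le_sup (inf_le_inf_left _ hxr₁) (inf_le_inf_left _ hxr₀)
      · exact inf_comm r₁ a ▸ le_himp_iff.mp hr₁y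
      · exact inf_comm r₀ aᶜ ▸ le_himp_iff.mp hr₀y
    · -- `a` is independent of `F ∪ H`, so it can be dropped from `x`
      have hFH : ↑(F ∪ H) ⊆ G := by simpa using ⟨hFG, hH⟩
      have haFH : a ∉ F ∪ H := by simp [haF, haH]
      have hsub : ∀ {K : Finset B} {z : B}, K ⊆ F ∪ H → z ∈ closure (K : Set B) →
          z ∈ closure (↑(F ∪ H) : Set B) :=
        fun hK hz => closure_mono (Finset.coe_subset.mpr hK) hz
      have hyFH := hsub Finset.subset_union_right hy
      have hx₁y := hfree.le_of_inf_le hFH haG haFH (hsub Finset.subset_union_left hx₁) hyFH hx₁y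
      have hx₀y := hfree.le_of_compl_inf_le hFH haG haFH (hsub Finset.subset_union_left hx₀) hyFH
        hx₀y
      obtain ⟨r, hr, hxr, hry⟩ := ih hFG (sup_mem hx₁ hx₀) hy (sup_le hx₁y hx₀y)
      refine ⟨r, hmono hr, le_trans ?_ hxr, hry⟩
      rw [hx_eq]
      exact sup_le_sup inf_le_right inf_le_right

theorem exists_interpolant (hfree : IsFreeGens G) {S T : Set B} (hS : S ⊆ G) (hT : T ⊆ G)
    {x y : B} (hx : x ∈ closure S) (hy : y ∈ closure T) (hxy : x ≤ y) :
    ∃ r ∈ closure (S ∩ T), x ≤ r ∧ r ≤ y := by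
  obtain ⟨F, hFS, hxF⟩ := exists_finset_of_mem_closure hx
  obtain ⟨H, hHT, hyH⟩ := exists_finset_of_mem_closure hy
  obtain ⟨r, hr, hxr, hry⟩ :=
    hfree.exists_interpolant_finset (hFS.trans hS) (hHT.trans hT) hxF hyH hxy
  exact ⟨r, closure_mono (inter_subset_inter hFS hHT) hr, hxr, hry⟩

theorem isUpperFinite_of_rank (hfree : IsFreeGens G) (hG : closure G = ⊤) {ι : Type*}
    [PartialOrder ι] {D : Set B} (rank : B → ι) (S : ι → Set B) (hSG : ∀ i, S i ⊆ G)
    (hDS : ∀ e ∈ D, e ∈ closure (S (rank e)))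
    (hrefl : ∀ i, IsCoinitialFor (↑(upperClosure D) ∩ closure (S i)) {d ∈ D | rank d ≤ i})
    (hanti : ∀ d ∈ D, ∀ e ∈ D, d ≤ e → rank e ≤ rank d)
    (hlevel : ∀ d ∈ D, (D ∩ Ici d ∩ rank ⁻¹' {rank d}).Finite) : IsUpperFinite D := by
  intro d₀ hd₀
  obtain ⟨F, hFG, hd₀F⟩ := exists_finset_of_mem_closure (hG ▸ mem_top : d₀ ∈ closure G)
  by_contra hinf
  -- the interpolants all lie in the finite algebra generated by `F`
  obtain ⟨v, ⟨-, hd₀v⟩, hv⟩ : ∃ v ∈ (closure (F : Set B) : Set B) ∩ Ici d₀,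
      {e ∈ D ∩ Ici d₀ | v ≤ e ∧ v ∈ closure (S (rank e))}.Infinite := by
    by_contra! hfin
    refine hinf ((((finite_closure F.finite_toSet).inter_of_left _).biUnion hfin).subset
      fun e he => ?_)
    obtain ⟨r, hr, hd₀r, hre⟩ := hfree.exists_interpolant hFG (hSG _) hd₀F (hDS e he.1) he.2
    exact mem_biUnion ⟨closure_mono inter_subset_left hr, hd₀r⟩
      ⟨he, hre, closure_mono inter_subset_right hr⟩
  have hbelow : ∀ e ∈ {e ∈ D ∩ Ici d₀ | v ≤ e ∧ v ∈ closure (S (rank e))},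
      ∃ d ∈ {d ∈ D | rank d ≤ rank e}, d ≤ v := fun e he =>
    hrefl (rank e) ⟨mem_upperClosure.mpr ⟨d₀, hd₀, hd₀v⟩, he.2.2⟩
  obtain ⟨e₁, he₁⟩ := hv.nonempty
  obtain ⟨d, ⟨hdD, hde₁⟩, hdv⟩ := hbelow e₁ he₁
  -- every such `e` lies above `d`, and `rank` decreases along `≤` in `D`, so all ranks agree
  have hrank : ∀ e ∈ {e ∈ D ∩ Ici d₀ | v ≤ e ∧ v ∈ closure (S (rank e))}, rank e = rank d := by
    intro e he
    obtain ⟨d', ⟨hd'D, hd'e⟩, hd'v⟩ := hbelow e he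
    exact le_antisymm (hanti d hdD e he.1.1 (hdv.trans he.2.1))
      (hde₁.trans ((hanti d' hd'D e₁ he₁.1.1 (hd'v.trans he₁.2.1)).trans hd'e))
  exact hv ((hlevel d hdD).subset fun e he => ⟨⟨he.1.1, hdv.trans he.2.1⟩, hrank e he⟩)

theorem exists_isCoinitialFor_isUpperFinite (hfree : IsFreeGens G) (hG : closure G = ⊤)
    (Q : Set B) : ∃ D ⊆ Q, IsCoinitialFor Q D ∧ IsUpperFinite D := by
  -- any well-ordered type indexing `B` would do
  obtain ⟨enum⟩ : Nonempty ((#B).ord.ToType ≃ B) := Cardinal.eq.mp (mk_ord_toType _)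
  choose S hSG hbS hScount hSrefl using fun i => exists_countable_reflecting hG Q (enum i)
  have hcover (b : B) : {i | b ∈ closure (S i)}.Nonempty :=
    ⟨enum.symm b, by simpa using hbS (enum.symm b)⟩
  let rank (b : B) := wellFounded_lt.min _ (hcover b)
  have hrank_mem (b : B) : b ∈ closure (S (rank b)) := wellFounded_lt.min_mem _ (hcover b)
  have hrank_le {b : B} {i : (#B).ord.ToType} (h : b ∈ closure (S i)) : rank b ≤ i :=
    wellFounded_lt.min_le (show i ∈ {i | b ∈ closure (S i)} from h)
  obtain ⟨D, hDQ, hcoinit, hanti, hlevel⟩ := exists_coinitial_of_countable_levels Q rank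
    fun i => (countable_closure (hScount i)).mono fun q hq => hq.2 ▸ hrank_mem q
  refine ⟨D, hDQ, fun q hq => ?_,
    hfree.isUpperFinite_of_rank hG rank S hSG (fun e _ => hrank_mem e) ?_ hanti hlevel⟩
  · obtain ⟨d, hd, -, hdq⟩ := hcoinit q hq
    exact ⟨d, hd, hdq⟩
  · rintro i v ⟨hvD, hv⟩
    obtain ⟨d, hd, hdv⟩ := mem_upperClosure.mp hvD
    obtain ⟨q, ⟨hqQ, hqS⟩, hqv⟩ := hSrefl i ⟨mem_upperClosure.mpr ⟨d, hDQ hd, hdv⟩, hv⟩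
    obtain ⟨d', hd', hd'q, hd'v⟩ := hcoinit q hqQ
    exact ⟨d', ⟨hd', hd'q.trans (hrank_le hqS)⟩, hd'v.trans hqv⟩

end IsFreeGens

/-- Every subset `Q` of a free boolean algebra is almost `ω`-op-like: `Q` has a dense
subset `D` (every element of `Q` has a lower bound in `D`) in which every element lies
below only finitely many elements of `D`. -/
theorem subset_free_boolean_almost_omega_op_like (G : Set B) (hfree : IsFreeGens G)
    (hgen : boolGen G = Set.univ) (Q : Set B) :
    ∃ D ⊆ Q, (∀ q ∈ Q, ∃ d ∈ D, d ≤ q) ∧ ∀ d ∈ D, {e | e ∈ D ∧ d < e}.Finite := by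
  have hG : closure G = ⊤ :=
    coe_eq_univ.mp (eq_univ_of_univ_subset (hgen ▸ boolGen_subset_closure G))
  obtain ⟨D, hDQ, hcoinit, hfin⟩ := hfree.exists_isCoinitialFor_isUpperFinite hG Q
  exact ⟨D, hDQ, fun q hq => hcoinit hq, fun d hd => (hfin d hd).subset fun e he => ⟨he.1, he.2.le⟩⟩
end

section
/- Let κ ≥ ω and let B be a coproduct (free product) of boolean algebras each of size at most κ. Then every subset of B has a dense subset in which no element lies below κ-many elements; i.e., every subset of B is almost κ^op-like. -/
/-!
Every element `b` of the free product has a least finite support `supp b`, and independence gives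
interpolation: for every finite `t`, each `m` has a least element above it with support in `t`,
and that element has support in `supp m ∩ t`. At most `κ` elements have support in a given
finite set.

Enumerate `Q` as `(q_ξ)` and take `Q_ξ ⊆ Q` of size `≤ κ` containing `q_ξ` and, for each of its
elements `e` and each `m` above `Q` with `supp m ⊆ supp e`, an element of `Q` below `m`. A set of
size `≤ κ` has a dense subset with small cones (in an enumeration of type `κ`, keep the elements of
least index below themselves), so choose recursively such a `D_ξ` for the part of `Q_ξ` not above
an earlier layer, and let `D = ⋃ D_ξ`. If `ξ` is least with some `d ∈ D_ξ` below `m`, every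
`e ∈ D` above `m` lies in `D_ξ` or has `supp m ⊄ supp e`; then `e` lies above the interpolant of
`m` on the proper subset `supp m ∩ supp e` of `supp m`, and induction on `|supp m|` bounds the cone
above `m` by finitely many sets of size `< κ`.
-/

open Cardinal Set

universe u v

variable {B : Type u} [BooleanAlgebra B]

def IsBoolSubalg (A : Set B) : Prop :=
  (⊥ : B) ∈ A ∧ (∀ x ∈ A, xᶜ ∈ A) ∧ ∀ x ∈ A, ∀ y ∈ A, x ⊔ y ∈ A

theorem Finset.inf_inter_inf_sdiff {α β : Type*} [SemilatticeInf α] [OrderTop α] [DecidableEq β]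
    (s t : Finset β) (f : β → α) : (s ∩ t).inf f ⊓ (s \ t).inf f = s.inf f := by
  rw [← Finset.inf_union, ← Finset.sup_eq_union, ← Finset.inf_eq_inter, sup_inf_sdiff]

theorem Cardinal.mk_biUnion_finset_lt {α : Type*} {β : Type u} {κ : Cardinal.{u}} (hκ : ℵ₀ ≤ κ)
    (s : Finset α) (f : α → Set β) (h : ∀ a ∈ s, #(f a) < κ) : #(⋃ a ∈ s, f a) < κ := by
  classical
  induction s using Finset.induction_on with
  | empty => simpa using aleph0_pos.trans_le hκ
  | insert a s _ ih =>
    rw [Finset.set_biUnion_insert]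
    exact (mk_union_le _ _).trans_lt <| add_lt_of_lt hκ (h a (Finset.mem_insert_self a s))
      (ih fun b hb => h b (Finset.mem_insert_of_mem hb))

theorem exists_isLeast_closed_superset_mk_le {α : Type u} {κ : Cardinal.{u}} (hκ : ℵ₀ ≤ κ)
    (G : α → Set α) (hG : ∀ a, #(G a) ≤ κ) {X : Set α} (hX : #X ≤ κ) :
    ∃ Y, IsLeast {Y | X ⊆ Y ∧ ∀ a ∈ Y, G a ⊆ Y} Y ∧ #Y ≤ κ := by
  set H : Set α → Set α := fun Z => Z ∪ ⋃ a ∈ Z, G a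
  have hH : ∀ {Z : Set α}, #Z ≤ κ → #(H Z) ≤ κ := fun hZ =>
    calc #(H _) ≤ κ + κ * κ :=
          (mk_union_le _ _).trans (add_le_add hZ ((mk_biUnion_le _ _).trans
            (mul_le_mul' hZ (ciSup_le' fun a => hG a))))
      _ = κ := by rw [mul_eq_self hκ, add_eq_self hκ]
  refine ⟨⋃ n : ℕ, H^[n] X, ⟨⟨subset_iUnion (fun n => H^[n] X) 0, ?_⟩, ?_⟩, ?_⟩
  · intro a ha x hx
    obtain ⟨n, hn⟩ := mem_iUnion.1 ha
    refine mem_iUnion.2 ⟨n + 1, ?_⟩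
    rw [Function.iterate_succ_apply']
    exact Or.inr (mem_biUnion hn hx)
  · rintro Z ⟨hXZ, hGZ⟩
    refine iUnion_subset fun n => ?_
    induction n with
    | zero => exact hXZ
    | succ n ih =>
      rw [Function.iterate_succ_apply']
      exact union_subset ih (iUnion₂_subset fun a ha => hGZ a (ih ha))
  · have hn : ∀ n, #(H^[n] X) ≤ κ := fun n => by
      induction n with
      | zero => exact hX
      | succ n ih => rw [Function.iterate_succ_apply']; exact hH ih
    have hunion := mk_iUnion_le_lift (fun n : ℕ => H^[n] X)
    simp only [lift_uzero, mk_nat, lift_aleph0] at hunion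
    calc _ ≤ ℵ₀ * ⨆ n, #(H^[n] X) := hunion
      _ ≤ κ * κ := mul_le_mul' hκ (ciSup_le' hn)
      _ = κ := mul_eq_self hκ

theorem WellFoundedLT.exists_forall_recursion {I β : Type*} [LT I] [WellFoundedLT I]
    (p : (ξ : I) → ((η : I) → η < ξ → β) → β → Prop) (h : ∀ ξ g, ∃ b, p ξ g b) :
    ∃ F : I → β, ∀ ξ, p ξ (fun η _ => F η) (F ξ) := by
  refine ⟨wellFounded_lt.fix fun ξ g => (h ξ g).choose, fun ξ => ?_⟩
  rw [wellFounded_lt.fix_eq]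
  exact (h _ _).choose_spec

section Poset

variable {P : Type u} [Preorder P] {κ : Cardinal.{u}}

-- The cone bound is asked at every point above `Q`, not only on `D`, because the union argument
-- applies it to a layer at points outside that layer.
def IsSmallConeDense (κ : Cardinal.{u}) (Q D : Set P) : Prop :=
  D ⊆ Q ∧ ∀ m ∈ upperClosure Q, (∃ d ∈ D, d ≤ m) ∧ #{e // e ∈ D ∧ m ≤ e} < κ

theorem exists_isSmallConeDense_of_mk_le (hκ : ℵ₀ ≤ κ) {Q : Set P} (hQ : #Q ≤ κ) :
    ∃ D, IsSmallConeDense κ Q D := by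
  obtain ⟨f⟩ : Nonempty (Q ↪ κ.ord.ToType) := by rwa [← le_def, mk_ord_toType]
  have hmin : ∀ x : Q, ∃ y ≤ x, ∀ z ≤ y, f y ≤ f z := by
    intro x
    obtain ⟨y, hyx, hy⟩ := (InvImage.wf f wellFounded_lt).has_min {y | y ≤ x} ⟨x, le_rfl⟩
    exact ⟨y, hyx, fun z hzy => not_lt.1 (hy z (hzy.trans hyx))⟩
  refine ⟨(↑) '' {y : Q | ∀ z ≤ y, f y ≤ f z}, by rintro _ ⟨y, -, rfl⟩; exact y.2, ?_⟩
  intro m hm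
  obtain ⟨q, hq, hqm⟩ := mem_upperClosure.1 hm
  obtain ⟨y, hyq, hy⟩ := hmin ⟨q, hq⟩
  refine ⟨⟨y, mem_image_of_mem _ hy, (Subtype.coe_le_coe.2 hyq).trans hqm⟩, ?_⟩
  have hcone : {e | e ∈ (↑) '' {y : Q | ∀ z ≤ y, f y ≤ f z} ∧ m ≤ e} ⊆
      (↑) '' (f ⁻¹' Iic (f y)) := by
    rintro _ ⟨⟨z, hz, rfl⟩, hmz⟩
    exact mem_image_of_mem _ (hz y (((Subtype.coe_le_coe.2 hyq).trans hqm).trans hmz))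
  calc #{e // e ∈ (↑) '' {y : Q | ∀ z ≤ y, f y ≤ f z} ∧ m ≤ e}
      ≤ #((↑) '' (f ⁻¹' Iic (f y)) : Set P) := mk_le_mk_of_subset hcone
    _ ≤ #(Iic (f y)) := mk_image_le.trans (mk_preimage_of_injective _ _ f.injective)
    _ < κ := by simpa using mk_Iic_lt (f y) (by simp) (by simpa using hκ)

section Layers

-- The pieces `Qf ξ` cover `Q`; the layer `Dl ξ` lives in the part of `Qf ξ` above no earlier layer.
variable {ι I : Type*} [LinearOrder I] (supp : P → Finset ι) {Q : Set P} {Qf Dl : I → Set P}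

theorem exists_layer_le
    (hDl : ∀ ξ, IsSmallConeDense κ (Qf ξ \ upperClosure (⋃ η < ξ, Dl η)) (Dl ξ))
    (hcover : Q ⊆ ⋃ ξ, Qf ξ) {m : P} (hm : m ∈ upperClosure Q) : ∃ ξ, ∃ d ∈ Dl ξ, d ≤ m := by
  obtain ⟨q, hq, hqm⟩ := mem_upperClosure.1 hm
  obtain ⟨ξ, hξ⟩ := mem_iUnion.1 (hcover hq)
  by_cases hprev : q ∈ upperClosure (⋃ η < ξ, Dl η)
  · obtain ⟨d, hd, hdq⟩ := mem_upperClosure.1 hprev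
    obtain ⟨η, -, hd⟩ := mem_iUnion₂.1 hd
    exact ⟨η, d, hd, hdq.trans hqm⟩
  · obtain ⟨d, hd, hdq⟩ := ((hDl ξ).2 q (subset_upperClosure ⟨hξ, hprev⟩)).1
    exact ⟨ξ, d, hd, hdq.trans hqm⟩

theorem layer_eq_of_supp_subset
    (hDl : ∀ ξ, IsSmallConeDense κ (Qf ξ \ upperClosure (⋃ η < ξ, Dl η)) (Dl ξ))
    (hQf : ∀ ξ, Qf ξ ⊆ Q)
    (hclosed : ∀ ξ, ∀ e ∈ Qf ξ, ∀ m ∈ upperClosure Q, supp m ⊆ supp e → ∃ x ∈ Qf ξ, x ≤ m)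
    {m d e : P} {ξ γ : I} (hd : d ∈ Dl ξ) (hdm : d ≤ m)
    (hmin : m ∉ upperClosure (⋃ η < ξ, Dl η)) (he : e ∈ Dl γ) (hme : m ≤ e)
    (hsupp : supp m ⊆ supp e) : γ = ξ := by
  have hrest : ∀ {x ζ}, x ∈ Dl ζ → x ∈ Qf ζ \ upperClosure (⋃ η < ζ, Dl η) :=
    fun hx => (hDl _).1 hx
  rcases lt_trichotomy γ ξ with hγ | rfl | hγ
  · have hmQ : m ∈ upperClosure Q := mem_upperClosure.2 ⟨d, hQf ξ (hrest hd).1, hdm⟩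
    obtain ⟨x, hx, hxm⟩ := hclosed γ e (hrest he).1 m hmQ hsupp
    refine absurd (mem_upperClosure.2 ?_) hmin
    by_cases hprev : x ∈ upperClosure (⋃ η < γ, Dl η)
    · obtain ⟨d', hd', hd'x⟩ := mem_upperClosure.1 hprev
      obtain ⟨η, hη, hd'⟩ := mem_iUnion₂.1 hd'
      exact ⟨d', mem_iUnion₂.2 ⟨η, hη.trans hγ, hd'⟩, hd'x.trans hxm⟩
    · obtain ⟨d', hd', hd'm⟩ := ((hDl γ).2 m (mem_upperClosure.2 ⟨x, ⟨hx, hprev⟩, hxm⟩)).1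
      exact ⟨d', mem_iUnion₂.2 ⟨γ, hγ, hd'⟩, hd'm⟩
  · rfl
  · exact absurd (mem_upperClosure.2 ⟨d, mem_iUnion₂.2 ⟨ξ, hγ, hd⟩, hdm.trans hme⟩) (hrest he).2

theorem mk_cone_iUnion_lt [DecidableEq ι] [WellFoundedLT I] (hκ : ℵ₀ ≤ κ)
    (hinterp : ∀ m t, ∃ c, supp c ⊆ supp m ∩ t ∧ IsLeast {b | supp b ⊆ t ∧ m ≤ b} c)
    (hDl : ∀ ξ, IsSmallConeDense κ (Qf ξ \ upperClosure (⋃ η < ξ, Dl η)) (Dl ξ))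
    (hQf : ∀ ξ, Qf ξ ⊆ Q)
    (hclosed : ∀ ξ, ∀ e ∈ Qf ξ, ∀ m ∈ upperClosure Q, supp m ⊆ supp e → ∃ x ∈ Qf ξ, x ≤ m)
    (hcover : Q ⊆ ⋃ ξ, Qf ξ) {m : P} (hm : m ∈ upperClosure Q) :
    #{e // e ∈ ⋃ ξ, Dl ξ ∧ m ≤ e} < κ := by
  choose proj hproj_supp hproj using hinterp
  induction hn : (supp m).card using Nat.strong_induction_on generalizing m with
  | _ n ih =>
  obtain ⟨ξ, ⟨d, hd, hdm⟩, hξ⟩ :=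
    wellFounded_lt.has_min {ξ | ∃ d ∈ Dl ξ, d ≤ m} (exists_layer_le hDl hcover hm)
  have hmin : m ∉ upperClosure (⋃ η < ξ, Dl η) := by
    intro h
    obtain ⟨d', hd', hd'm⟩ := mem_upperClosure.1 h
    obtain ⟨η, hη, hd'⟩ := mem_iUnion₂.1 hd'
    exact hξ η ⟨d', hd', hd'm⟩ hη
  have hsplit : {e | e ∈ ⋃ ξ, Dl ξ ∧ m ≤ e} ⊆ {e | e ∈ Dl ξ ∧ m ≤ e} ∪
      ⋃ u ∈ (supp m).ssubsets, {e | e ∈ ⋃ ξ, Dl ξ ∧ proj m u ≤ e} := by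
    rintro e ⟨he, hme⟩
    obtain ⟨γ, he⟩ := mem_iUnion.1 he
    by_cases hsupp : supp m ⊆ supp e
    · obtain rfl := layer_eq_of_supp_subset supp hDl hQf hclosed hd hdm hmin he hme hsupp
      exact Or.inl ⟨he, hme⟩
    · have hu : supp m ∩ supp e ⊂ supp m := Finset.inter_subset_left.ssubset_of_not_subset
        fun h => hsupp (h.trans Finset.inter_subset_right)
      refine Or.inr (mem_iUnion₂.2 ⟨_, Finset.mem_ssubsets.2 hu, mem_iUnion.2 ⟨γ, he⟩, ?_⟩)
      exact ((hproj _ _).2 ⟨hproj_supp m _, (hproj m _).1.2⟩).trans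
        ((hproj m _).2 ⟨subset_rfl, hme⟩)
  have hsmaller : ∀ u ∈ (supp m).ssubsets, #{e | e ∈ ⋃ ξ, Dl ξ ∧ proj m u ≤ e} < κ := by
    intro u hu
    refine ih _ ?_ (mem_upperClosure.2 ?_) rfl
    · exact (Finset.card_le_card ((hproj_supp m u).trans Finset.inter_subset_right)).trans_lt
        (hn ▸ Finset.card_lt_card (Finset.mem_ssubsets.1 hu))
    · obtain ⟨q, hq, hqm⟩ := mem_upperClosure.1 hm
      exact ⟨q, hq, hqm.trans (hproj m u).1.2⟩
  calc #{e // e ∈ ⋃ ξ, Dl ξ ∧ m ≤ e}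
      ≤ #({e | e ∈ Dl ξ ∧ m ≤ e} ∪
          ⋃ u ∈ (supp m).ssubsets, {e | e ∈ ⋃ ξ, Dl ξ ∧ proj m u ≤ e} : Set P) :=
        mk_le_mk_of_subset hsplit
    _ ≤ _ := mk_union_le _ _
    _ < κ := add_lt_of_lt hκ ((hDl ξ).2 m (mem_upperClosure.2 ⟨d, (hDl ξ).1 hd, hdm⟩)).2
        (mk_biUnion_finset_lt hκ _ _ hsmaller)

theorem isSmallConeDense_iUnion [DecidableEq ι] [WellFoundedLT I] (hκ : ℵ₀ ≤ κ)
    (hinterp : ∀ m t, ∃ c, supp c ⊆ supp m ∩ t ∧ IsLeast {b | supp b ⊆ t ∧ m ≤ b} c)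
    (hDl : ∀ ξ, IsSmallConeDense κ (Qf ξ \ upperClosure (⋃ η < ξ, Dl η)) (Dl ξ))
    (hQf : ∀ ξ, Qf ξ ⊆ Q)
    (hclosed : ∀ ξ, ∀ e ∈ Qf ξ, ∀ m ∈ upperClosure Q, supp m ⊆ supp e → ∃ x ∈ Qf ξ, x ≤ m)
    (hcover : Q ⊆ ⋃ ξ, Qf ξ) : IsSmallConeDense κ Q (⋃ ξ, Dl ξ) := by
  refine ⟨iUnion_subset fun ξ => ((hDl ξ).1.trans sdiff_subset).trans (hQf ξ), fun m hm =>
    ⟨?_, mk_cone_iUnion_lt supp hκ hinterp hDl hQf hclosed hcover hm⟩⟩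
  obtain ⟨ξ, d, hd, hdm⟩ := exists_layer_le hDl hcover hm
  exact ⟨d, mem_iUnion.2 ⟨ξ, hd⟩, hdm⟩

end Layers

theorem exists_isSmallConeDense {ι : Type*} [DecidableEq ι] (hκ : ℵ₀ ≤ κ) (supp : P → Finset ι)
    (hsmall : ∀ s, #{b | supp b ⊆ s} ≤ κ)
    (hinterp : ∀ m t, ∃ c, supp c ⊆ supp m ∩ t ∧ IsLeast {b | supp b ⊆ t ∧ m ≤ b} c)
    (Q : Set P) : ∃ D, IsSmallConeDense κ Q D := by
  choose! w hwQ hwm using fun m (hm : m ∈ upperClosure Q) => mem_upperClosure.1 hm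
  set G : P → Set P := fun e => w '' ({m | supp m ⊆ supp e} ∩ upperClosure Q)
  have hGQ : ∀ e, G e ⊆ Q := by
    rintro e _ ⟨m, ⟨-, hm⟩, rfl⟩
    exact hwQ m hm
  have hG : ∀ e, #(G e) ≤ κ := fun e =>
    mk_image_le.trans ((mk_le_mk_of_subset inter_subset_left).trans (hsmall _))
  obtain ⟨enum⟩ : Nonempty (Q ≃ (#Q).ord.ToType) := Cardinal.eq.1 (mk_ord_toType _).symm
  choose Qf hQf hQf_card using fun ξ => exists_isLeast_closed_superset_mk_le hκ G hG
    (X := {(enum.symm ξ : P)}) (by simpa using one_le_aleph0.trans hκ)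
  obtain ⟨Dl, hDl⟩ := WellFoundedLT.exists_forall_recursion
    (fun ξ g D => IsSmallConeDense κ (Qf ξ \ upperClosure (⋃ η, ⋃ h : η < ξ, g η h)) D)
    fun ξ _ => exists_isSmallConeDense_of_mk_le hκ
      ((mk_le_mk_of_subset sdiff_subset).trans (hQf_card ξ))
  refine ⟨_, isSmallConeDense_iUnion supp hκ hinterp hDl
    (fun ξ => (hQf ξ).2 ⟨singleton_subset_iff.2 (enum.symm ξ).2, fun a _ => hGQ a⟩) ?_ ?_⟩
  · intro ξ e he m hm hsupp
    exact ⟨w m, (hQf ξ).1.2 e he ⟨m, ⟨hsupp, hm⟩, rfl⟩, hwm m hm⟩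
  · intro x hx
    exact mem_iUnion.2 ⟨enum ⟨x, hx⟩, (hQf _).1.1 (by simp)⟩

end Poset

namespace IsBoolSubalg

variable {S : Set B}

theorem compl_mem (hS : IsBoolSubalg S) {x : B} (hx : x ∈ S) : xᶜ ∈ S := hS.2.1 x hx

theorem top_mem (hS : IsBoolSubalg S) : ⊤ ∈ S := by simpa using hS.compl_mem hS.1

theorem inf_mem (hS : IsBoolSubalg S) {x y : B} (hx : x ∈ S) (hy : y ∈ S) : x ⊓ y ∈ S := by
  simpa using hS.compl_mem (hS.2.2 _ (hS.compl_mem hx) _ (hS.compl_mem hy))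

end IsBoolSubalg

section FreeProduct

variable {ι : Type v} {A : ι → Set B}

def IsBoolIndep (A : ι → Set B) : Prop :=
  ∀ s : Finset ι, ∀ f : ι → B, (∀ i ∈ s, f i ∈ A i ∧ f i ≠ ⊥) → s.inf f ≠ ⊥

-- The subalgebra generated by the factors `A i`, `i ∈ s`, given by its normal form: finite joins
-- of meets `s.inf f` with `f i ∈ A i`.
def genBy (A : ι → Set B) (s : Finset ι) : Set B :=
  {b | ∃ F : Finset (ι → B), (∀ f ∈ F, ∀ i ∈ s, f i ∈ A i) ∧ F.sup (fun f => s.inf f) = b}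

theorem bot_mem_genBy (s : Finset ι) : (⊥ : B) ∈ genBy A s := ⟨∅, by simp, rfl⟩

theorem finsetInf_mem_genBy {s : Finset ι} {f : ι → B} (hf : ∀ i ∈ s, f i ∈ A i) :
    s.inf f ∈ genBy A s :=
  ⟨{f}, by simpa using hf, by simp⟩

theorem sup_mem_genBy {s : Finset ι} {b c : B} (hb : b ∈ genBy A s) (hc : c ∈ genBy A s) :
    b ⊔ c ∈ genBy A s := by
  classical
  obtain ⟨F, hF, rfl⟩ := hb
  obtain ⟨G, hG, rfl⟩ := hc
  exact ⟨F ∪ G, fun f hf => (Finset.mem_union.1 hf).elim (hF f) (hG f), Finset.sup_union⟩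

theorem finsetSup_mem_genBy_of_forall {s : Finset ι} {α : Type*} {F : Finset α} {g : α → B}
    (hg : ∀ a ∈ F, g a ∈ genBy A s) : F.sup g ∈ genBy A s := by
  exact Finset.sup_induction (bot_mem_genBy s) (fun _ hb _ hc => sup_mem_genBy hb hc) hg

theorem inf_mem_genBy (hsub : ∀ i, IsBoolSubalg (A i)) {s : Finset ι} {b c : B}
    (hb : b ∈ genBy A s) (hc : c ∈ genBy A s) : b ⊓ c ∈ genBy A s := by
  classical
  obtain ⟨F, hF, rfl⟩ := hb
  obtain ⟨G, hG, rfl⟩ := hc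
  refine ⟨(F ×ˢ G).image fun p => p.1 ⊓ p.2, ?_, ?_⟩
  · simp only [Finset.mem_image, Finset.mem_product]
    rintro _ ⟨p, ⟨hp₁, hp₂⟩, rfl⟩ i hi
    exact (hsub i).inf_mem (hF _ hp₁ i hi) (hG _ hp₂ i hi)
  · rw [Finset.sup_image, Finset.sup_inf_sup]
    exact Finset.sup_congr rfl fun p _ => Finset.inf_inf

theorem mem_genBy_of_mem (hsub : ∀ i, IsBoolSubalg (A i)) {s : Finset ι} {i : ι} (hi : i ∈ s)
    {a : B} (ha : a ∈ A i) : a ∈ genBy A s := by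
  classical
  have hf : ∀ j ∈ s, (if j = i then a else (⊤ : B)) ∈ A j := fun j _ => by
    split_ifs with h
    · exact h ▸ ha
    · exact (hsub j).top_mem
  convert finsetInf_mem_genBy hf
  refine le_antisymm (Finset.le_inf fun j _ => ?_) ?_
  · split_ifs <;> simp
  · simpa using Finset.inf_le (f := fun j => if j = i then a else (⊤ : B)) hi

theorem finsetInf_mem_genBy_of_forall (hsub : ∀ i, IsBoolSubalg (A i)) {s : Finset ι} {α : Type*}
    {F : Finset α} {g : α → B} (hg : ∀ a ∈ F, g a ∈ genBy A s) : F.inf g ∈ genBy A s := by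
  refine Finset.inf_induction ?_ (fun _ hb _ hc => inf_mem_genBy hsub hb hc) hg
  simpa using finsetInf_mem_genBy (s := s) (f := fun _ => ⊤) fun i _ => (hsub i).top_mem

theorem genBy_mono (hsub : ∀ i, IsBoolSubalg (A i)) {s t : Finset ι} (hst : s ⊆ t) :
    genBy A s ⊆ genBy A t := by
  rintro _ ⟨F, hF, rfl⟩
  exact finsetSup_mem_genBy_of_forall fun f hf => finsetInf_mem_genBy_of_forall hsub fun i hi =>
    mem_genBy_of_mem hsub (hst hi) (hF f hf i hi)

theorem compl_mem_genBy (hsub : ∀ i, IsBoolSubalg (A i)) {s : Finset ι} {b : B}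
    (hb : b ∈ genBy A s) : bᶜ ∈ genBy A s := by
  obtain ⟨F, hF, rfl⟩ := hb
  rw [Finset.compl_sup]
  refine finsetInf_mem_genBy_of_forall hsub fun f hf => ?_
  rw [Finset.compl_inf]
  exact finsetSup_mem_genBy_of_forall fun i hi =>
    mem_genBy_of_mem hsub hi ((hsub i).compl_mem (hF f hf i hi))

theorem exists_finsetInf_le_of_mem_genBy {s : Finset ι} {b : B} (hb : b ∈ genBy A s)
    (hb₀ : b ≠ ⊥) : ∃ f : ι → B, (∀ i ∈ s, f i ∈ A i) ∧ s.inf f ≠ ⊥ ∧ s.inf f ≤ b := by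
  obtain ⟨F, hF, rfl⟩ := hb
  obtain ⟨f, hf, hf₀⟩ : ∃ f ∈ F, s.inf f ≠ ⊥ := by
    by_contra! h
    exact hb₀ ((Finset.sup_eq_bot_iff _ _).2 h)
  exact ⟨f, hF f hf, hf₀, Finset.le_sup (f := fun f => s.inf f) hf⟩

theorem inf_ne_bot_of_disjoint (hind : IsBoolIndep A) {s t : Finset ι} (hst : Disjoint s t)
    {b c : B} (hb : b ∈ genBy A s) (hc : c ∈ genBy A t) (hb₀ : b ≠ ⊥) (hc₀ : c ≠ ⊥) :
    b ⊓ c ≠ ⊥ := by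
  classical
  obtain ⟨f, hfA, hf₀, hfb⟩ := exists_finsetInf_le_of_mem_genBy hb hb₀
  obtain ⟨g, hgA, hg₀, hgc⟩ := exists_finsetInf_le_of_mem_genBy hc hc₀
  have hs : s.inf (s.piecewise f g) = s.inf f :=
    Finset.inf_congr rfl fun i hi => s.piecewise_eq_of_mem f g hi
  have ht : t.inf (s.piecewise f g) = t.inf g :=
    Finset.inf_congr rfl fun i hi =>
      s.piecewise_eq_of_notMem f g (hst.notMem_of_mem_right_finset hi)
  have hfg : (s ∪ t).inf (s.piecewise f g) ≠ ⊥ := by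
    refine hind _ _ fun i hi => ?_
    rcases Finset.mem_union.1 hi with hi | hi
    · rw [s.piecewise_eq_of_mem f g hi]
      exact ⟨hfA i hi, ne_bot_of_le_ne_bot hf₀ (Finset.inf_le hi)⟩
    · rw [s.piecewise_eq_of_notMem f g (hst.notMem_of_mem_right_finset hi)]
      exact ⟨hgA i hi, ne_bot_of_le_ne_bot hg₀ (Finset.inf_le hi)⟩
  rw [Finset.inf_union, hs, ht] at hfg
  exact ne_bot_of_le_ne_bot hfg (inf_le_inf hfb hgc)

theorem exists_isLeast_genBy [DecidableEq ι] (hsub : ∀ i, IsBoolSubalg (A i))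
    (hind : IsBoolIndep A) {s : Finset ι} (t : Finset ι) {m : B} (hm : m ∈ genBy A s) :
    ∃ c ∈ genBy A (s ∩ t), IsLeast {b | b ∈ genBy A t ∧ m ≤ b} c := by
  classical
  obtain ⟨F, hF, rfl⟩ := hm
  set F' := F.filter fun f => (s \ t).inf f ≠ ⊥
  have hc : F'.sup (fun f => (s ∩ t).inf f) ∈ genBy A (s ∩ t) :=
    ⟨F', fun f hf i hi => hF f (Finset.mem_of_mem_filter f hf) i (Finset.mem_inter.1 hi).1, rfl⟩
  refine ⟨_, hc, ⟨genBy_mono hsub Finset.inter_subset_right hc, Finset.sup_le fun f hf => ?_⟩,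
    fun b ⟨hb, hmb⟩ => Finset.sup_le fun f hf => ?_⟩
  · by_cases hf₀ : (s \ t).inf f = ⊥
    · simp [← Finset.inf_inter_inf_sdiff s t, hf₀]
    · exact (Finset.inf_inter_inf_sdiff s t f ▸ inf_le_left).trans
        (Finset.le_sup (f := fun f => (s ∩ t).inf f) (Finset.mem_filter.2 ⟨hf, hf₀⟩))
  · -- `(s ∩ t).inf f ⊓ bᶜ`, `(s \ t).inf f` have disjoint supports, yet meet in `s.inf f ⊓ bᶜ = ⊥`
    obtain ⟨hfF, hf₀⟩ := Finset.mem_filter.1 hf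
    have hfb : s.inf f ≤ b := (Finset.le_sup (f := fun f => s.inf f) hfF).trans hmb
    by_contra hle
    refine inf_ne_bot_of_disjoint hind Finset.disjoint_sdiff
      (inf_mem_genBy hsub (genBy_mono hsub Finset.inter_subset_right
        (finsetInf_mem_genBy fun i hi => hF f hfF i (Finset.mem_inter.1 hi).1))
        (compl_mem_genBy hsub hb))
      (finsetInf_mem_genBy fun i hi => hF f hfF i (Finset.mem_sdiff.1 hi).1)
      (fun h => hle (disjoint_compl_right_iff.1 (disjoint_iff.2 h))) hf₀ ?_
    rw [inf_right_comm, Finset.inf_inter_inf_sdiff]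
    exact disjoint_iff.1 (disjoint_compl_right_iff.2 hfb)

theorem exists_mem_genBy (hsub : ∀ i, IsBoolSubalg (A i)) (hgen : boolGen (⋃ i, A i) = Set.univ)
    (b : B) : ∃ s, b ∈ genBy A s := by
  classical
  refine (hgen.symm ▸ mem_univ b : b ∈ boolGen (⋃ i, A i)) {b | ∃ s, b ∈ genBy A s}
    ⟨?_, ⟨∅, bot_mem_genBy ∅⟩, fun x ⟨s, hx⟩ => ⟨s, compl_mem_genBy hsub hx⟩,
      fun x ⟨s, hx⟩ y ⟨t, hy⟩ => ⟨s ∪ t, sup_mem_genBy (genBy_mono hsub Finset.subset_union_left hx)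
        (genBy_mono hsub Finset.subset_union_right hy)⟩⟩
  rintro a ⟨_, ⟨i, rfl⟩, ha⟩
  exact ⟨{i}, mem_genBy_of_mem hsub (Finset.mem_singleton_self i) ha⟩

theorem mem_genBy_inter [DecidableEq ι] (hsub : ∀ i, IsBoolSubalg (A i)) (hind : IsBoolIndep A)
    {s t : Finset ι} {b : B} (hs : b ∈ genBy A s) (ht : b ∈ genBy A t) : b ∈ genBy A (s ∩ t) := by
  obtain ⟨c, hc, hleast⟩ := exists_isLeast_genBy hsub hind t hs
  rwa [le_antisymm (hleast.2 ⟨ht, le_rfl⟩) hleast.1.2] at hc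

theorem exists_forall_mem_genBy_iff (hsub : ∀ i, IsBoolSubalg (A i)) (hind : IsBoolIndep A)
    (hgen : boolGen (⋃ i, A i) = Set.univ) (b : B) : ∃ s, ∀ t, b ∈ genBy A t ↔ s ⊆ t := by
  classical
  obtain ⟨s, hs, hmin⟩ := wellFounded_lt.has_min {s | b ∈ genBy A s} (exists_mem_genBy hsub hgen b)
  refine ⟨s, fun t => ⟨fun ht => ?_, fun hst => genBy_mono hsub hst hs⟩⟩
  by_contra hst
  exact hmin _ (mem_genBy_inter hsub hind hs ht)
    (Finset.inter_subset_left.ssubset_of_not_subset fun h =>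
      hst (h.trans Finset.inter_subset_right))

theorem mk_finsetInf_le {κ : Cardinal.{u}} (hκ : ℵ₀ ≤ κ) (hsize : ∀ i, #(A i) ≤ κ) (s : Finset ι) :
    #{b | ∃ f : ι → B, (∀ i ∈ s, f i ∈ A i) ∧ s.inf f = b} ≤ κ := by
  classical
  induction s using Finset.induction_on with
  | empty => simpa using one_le_aleph0.trans hκ
  | insert i s hi ih =>
    have : {b | ∃ f : ι → B, (∀ j ∈ insert i s, f j ∈ A j) ∧ (insert i s).inf f = b} ⊆
        image2 (· ⊓ ·) (A i) {b | ∃ f : ι → B, (∀ j ∈ s, f j ∈ A j) ∧ s.inf f = b} := by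
      rintro _ ⟨f, hf, rfl⟩
      rw [Finset.inf_insert]
      exact mem_image2_of_mem (hf i (Finset.mem_insert_self i s))
        ⟨f, fun j hj => hf j (Finset.mem_insert_of_mem hj), rfl⟩
    calc _ ≤ κ * κ :=
          (mk_le_mk_of_subset this).trans (mk_image2_le.trans (mul_le_mul' (hsize i) ih))
      _ = κ := mul_eq_self hκ

theorem mk_genBy_le {κ : Cardinal.{u}} (hκ : ℵ₀ ≤ κ) (hsize : ∀ i, #(A i) ≤ κ) (s : Finset ι) :
    #(genBy A s) ≤ κ := by
  classical
  set M := {b | ∃ f : ι → B, (∀ i ∈ s, f i ∈ A i) ∧ s.inf f = b}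
  have hsub : genBy A s ⊆ range fun G : Finset M => G.sup (↑) := by
    rintro _ ⟨F, hF, rfl⟩
    refine ⟨F.attach.image fun f => ⟨s.inf f.1, f.1, hF f.1 f.2, rfl⟩, ?_⟩
    dsimp only
    rw [Finset.sup_image, ← Finset.sup_attach F]
    rfl
  calc #(genBy A s) ≤ #(Finset M) := (mk_le_mk_of_subset hsub).trans mk_range_le
    _ ≤ #(List M) := mk_le_of_surjective fun G => ⟨G.toList, G.toList_toFinset⟩
    _ ≤ max ℵ₀ #M := mk_list_le_max _
    _ ≤ κ := max_le hκ (mk_finsetInf_le hκ hsize s)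

theorem exists_supp_of_isBoolIndep [DecidableEq ι] {κ : Cardinal.{u}} (hκ : ℵ₀ ≤ κ)
    (hsub : ∀ i, IsBoolSubalg (A i)) (hsize : ∀ i, #(A i) ≤ κ)
    (hgen : boolGen (⋃ i, A i) = Set.univ) (hind : IsBoolIndep A) :
    ∃ supp : B → Finset ι, (∀ s, #{b | supp b ⊆ s} ≤ κ) ∧
      ∀ m t, ∃ c, supp c ⊆ supp m ∩ t ∧ IsLeast {b | supp b ⊆ t ∧ m ≤ b} c := by
  choose supp hsupp using exists_forall_mem_genBy_iff hsub hind hgen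
  refine ⟨supp, fun s => (mk_le_mk_of_subset fun b hb => (hsupp b s).2 hb).trans
    (mk_genBy_le hκ hsize s), fun m t => ?_⟩
  obtain ⟨c, hc, hleast⟩ := exists_isLeast_genBy hsub hind t ((hsupp m _).2 subset_rfl)
  exact ⟨c, (hsupp c _).1 hc, ⟨(hsupp c t).1 hleast.1.1, hleast.1.2⟩,
    fun b ⟨hb, hmb⟩ => hleast.2 ⟨(hsupp b t).2 hb, hmb⟩⟩

end FreeProduct

/-- Suppose `κ ≥ ω` and `B` is (internally) a coproduct (free product) of boolean
subalgebras `A i`, each of size at most `κ`: the `A i` generate `B` and are independent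
(every finite meet of nonzero elements from distinct factors is nonzero).  Then every
subset `Q` of `B` is almost `κ`-op-like: it has a dense subset `D` in which no element
lies below `κ`-many elements of `D`. -/
theorem subset_coproduct_almost_kappa_op_like {ι : Type u} (κ : Cardinal.{u}) (hκ : ℵ₀ ≤ κ)
    (A : ι → Set B) (hsub : ∀ i, IsBoolSubalg (A i)) (hsize : ∀ i, #(A i) ≤ κ)
    (hgen : boolGen (⋃ i, A i) = Set.univ)
    (hind : ∀ s : Finset ι, ∀ f : ι → B, (∀ i ∈ s, f i ∈ A i ∧ f i ≠ ⊥) → s.inf f ≠ ⊥)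
    (Q : Set B) :
    ∃ D ⊆ Q, (∀ q ∈ Q, ∃ d ∈ D, d ≤ q) ∧
      ∀ d ∈ D, #{e : B // e ∈ D ∧ d < e} < κ := by
  classical
  obtain ⟨supp, hsmall, hinterp⟩ := exists_supp_of_isBoolIndep hκ hsub hsize hgen hind
  obtain ⟨D, hDQ, hD⟩ := exists_isSmallConeDense hκ supp hsmall hinterp Q
  refine ⟨D, hDQ, fun q hq => (hD q (subset_upperClosure hq)).1, fun d hd => ?_⟩
  exact (mk_subtype_mono fun e he => ⟨he.1, he.2.le⟩).trans_lt
    (hD d (subset_upperClosure (hDQ hd))).2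
end

section
/- Suppose Y is a continuous Hausdorff image of a product X = ∏_{i∈I} X_i of compact Hausdorff spaces. Then every compact subset of Y has a neighborhood base that is (sup_{i∈I} w(X_i))^op-like; i.e., χ_K Nt(Y) ≤ sup_{i∈I} w(X_i). -/
open Cardinal TopologicalSpace

universe u

/-- `A` is a neighborhood base of the set `E` in `X`. -/
def IsNbhdBase (X : Type u) [TopologicalSpace X] (E : Set X) (A : Set (Set X)) : Prop :=
  (∀ u ∈ A, IsOpen u ∧ E ⊆ u) ∧ ∀ v : Set X, IsOpen v → E ⊆ v → ∃ u ∈ A, u ⊆ v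

open Set Function Topology

/-!
Each `X i` has a base `B i` with `#(B i) ≤ κ := ⨆ i, weight (X i)` and is therefore a continuous
image of a closed subset `Z i` of the Cantor cube `2^(B i)`; so `Y` is a continuous image `g` of
`P := ∏ i, Z i`, a compact space whose coordinates are indexed by `Σ i, B i`. For a finite set
`G` of coordinates let `M G` be the smallest union of `G`-cylinders containing `g ⁻¹' K`; the
sets `u G := Y \ g (P \ M G)` are open neighbourhoods of `K` forming a neighbourhood base.

Label the coordinates of each block injectively by ordinals `< κ.ord`, let the height of `G` be its
largest label, and keep those `u F` whose height is minimal among all `u G ⊆ u F`: still a base.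
If `u F ⊂ u G` are both kept, the height of `G` is at most that of `F`. Moreover, if
`M F₁ ⊆ g ⁻¹' (u F)`, splicing points shows that `u G` only depends on the coordinates of `G`
in the finitely many blocks met by `F₁`. Fewer than `κ` coordinates there
have label at most the height of `F`, hence fewer than `κ` kept sets strictly contain `u F`.
-/

theorem exists_le_forall_le_of_wellFoundedLT {ι α β : Type*} [Preorder α] [LinearOrder β]
    [WellFoundedLT β] (s : ι → α) (r : ι → β) (i : ι) :
    ∃ j, s j ≤ s i ∧ ∀ k, s k ≤ s j → r j ≤ r k := by
  obtain ⟨j, hji, hj⟩ := (InvImage.wf r wellFounded_lt).has_min {k | s k ≤ s i} ⟨i, le_rfl⟩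
  exact ⟨j, hji, fun k hkj => not_lt.1 (hj k (le_trans hkj hji))⟩

theorem exists_fiberwise_injective_lt_ord {ι : Type u} {β : ι → Type u} {κ : Cardinal.{u}}
    (hβ : ∀ i, #(β i) ≤ κ) :
    ∃ ℓ : (Σ i, β i) → Ordinal.{u}, (∀ j, ℓ j < κ.ord) ∧ ∀ i, Injective fun b => ℓ ⟨i, b⟩ := by
  have e : ∀ i, β i ↪ Iio κ.ord := fun i => Classical.choice <| lift_mk_le'.1 <| by
    simpa using hβ i
  exact ⟨fun j => e j.1 j.2, fun j => (e j.1 j.2).2,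
    fun i => Subtype.val_injective.comp (e i).injective⟩

theorem mk_setOf_fst_mem_and_le_lt {ι : Type u} {β : ι → Type u} {ℓ : (Σ i, β i) → Ordinal.{u}}
    (hℓ : ∀ i, Injective fun b => ℓ ⟨i, b⟩) (s : Finset ι) {κ : Cardinal.{u}} (hκ : ℵ₀ ≤ κ)
    {o : Ordinal.{u}} (ho : o < κ.ord) : #{j : Σ i, β i | j.1 ∈ s ∧ ℓ j ≤ o} < κ := by
  have hemb : lift.{u + 1} #{j : Σ i, β i | j.1 ∈ s ∧ ℓ j ≤ o} ≤
      lift.{u} #(s × Iio (Order.succ o)) := by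
    refine lift_mk_le'.2 ⟨⟨fun j => (⟨j.1.1, j.2.1⟩, ⟨ℓ j, Order.lt_succ_of_le j.2.2⟩), ?_⟩⟩
    rintro ⟨⟨i, b⟩, _⟩ ⟨⟨i', b'⟩, _⟩ h
    simp only [Prod.mk.injEq, Subtype.mk.injEq] at h
    obtain ⟨rfl, h⟩ := h
    obtain rfl : b = b' := hℓ i (congrArg Subtype.val h)
    rfl
  have hsucc : (Order.succ o).card < κ := lt_ord.1 ((isSuccLimit_ord hκ).succ_lt ho)
  rw [mk_prod, mk_Iio_ordinal, lift_lift, ← lift_mul, lift_lift, lift_le] at hemb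
  exact hemb.trans_lt (mul_lt_of_lt hκ (mk_lt_aleph0.trans_le hκ) hsucc)

theorem mk_finset_lt_of_mk_lt {α : Type u} {κ : Cardinal.{u}} (hκ : ℵ₀ ≤ κ) (hα : #α < κ) :
    #(Finset α) < κ := by
  cases finite_or_infinite α
  · exact mk_lt_aleph0.trans_le hκ
  · rwa [mk_finset_of_infinite]

section BasisCodes

variable {X : Type*} [TopologicalSpace X]

/-- Taking `closure U` rather than `U` for `ε U = true` makes this relation closed, while in a
Hausdorff space each code `ε` still determines at most one point. -/
def basisCodes (B : Set (Set X)) : Set ((B → Bool) × X) :=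
  {p | ∀ U : B, (p.1 U = true → p.2 ∈ closure (U : Set X)) ∧
    (p.1 U = false → p.2 ∉ (U : Set X))}

theorem isClosed_basisCodes {B : Set (Set X)} (hB : ∀ U ∈ B, IsOpen U) :
    IsClosed (basisCodes B) := by
  have hval : ∀ (U : B) (b : Bool), IsOpen {p : (B → Bool) × X | p.1 U = b} :=
    fun U b => (isOpen_discrete {b}).preimage (f := fun p : (B → Bool) × X => p.1 U)
      (by fun_prop)
  simp only [basisCodes, ofPred_forall, ofPred_and]
  exact isClosed_iInter fun U =>
    (isClosed_imp (hval U true) (isClosed_closure.preimage continuous_snd)).inter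
      (isClosed_imp (hval U false) ((hB U U.2).isClosed_compl.preimage continuous_snd))

open scoped Classical in
theorem mk_decide_mem_basisCodes (B : Set (Set X)) (x : X) :
    (fun U : B => decide (x ∈ (U : Set X)), x) ∈ basisCodes B := fun U => by
  by_cases hx : x ∈ (U : Set X)
  · simp [hx, subset_closure hx]
  · simp [hx]

theorem eq_of_mem_basisCodes [T2Space X] {B : Set (Set X)} (hB : IsTopologicalBasis B)
    {ε : B → Bool} {x y : X} (hx : (ε, x) ∈ basisCodes B) (hy : (ε, y) ∈ basisCodes B) :
    x = y := by
  by_contra hxy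
  obtain ⟨O₁, O₂, hO₁, hO₂, hxO₁, hyO₂, hO⟩ := t2_separation hxy
  obtain ⟨U, hUB, hxU, hUO₁⟩ := hB.exists_subset_of_mem_open hxO₁ hO₁
  have hyU : y ∉ closure U :=
    fun h => ((hO.mono_left hUO₁).closure_left hO₂).notMem_of_mem_left h hyO₂
  cases hε : ε ⟨U, hUB⟩
  · exact (hx ⟨U, hUB⟩).2 hε hxU
  · exact hyU ((hy ⟨U, hUB⟩).1 hε)

theorem TopologicalSpace.IsTopologicalBasis.exists_isClosed_continuous_surjective
    [CompactSpace X] [T2Space X] {B : Set (Set X)} (hB : IsTopologicalBasis B) :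
    ∃ Z : Set (B → Bool), IsClosed Z ∧ ∃ q : Z → X, Continuous q ∧ Surjective q := by
  have hcl := isClosed_basisCodes fun U hU => hB.isOpen hU
  have hcode : ∀ ε : Prod.fst '' basisCodes B, ∃ x, (ε.1, x) ∈ basisCodes B := by
    rintro ⟨_, p, hp, rfl⟩
    exact ⟨p.2, hp⟩
  choose q hq using hcode
  refine ⟨_, isClosedMap_fst_of_compactSpace _ hcl, q,
    continuous_iff_isClosed.2 fun D hD => ?_,
    fun x => ⟨⟨_, _, mk_decide_mem_basisCodes B x, rfl⟩, ?_⟩⟩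
  · have hpre : q ⁻¹' D =
        Subtype.val ⁻¹' (Prod.fst '' (basisCodes B ∩ Prod.snd ⁻¹' D)) := by
      ext ε
      refine ⟨fun h => ⟨(ε.1, q ε), ⟨hq ε, h⟩, rfl⟩, ?_⟩
      rintro ⟨⟨_, x⟩, ⟨hx, hxD⟩, rfl⟩
      show q ε ∈ D
      rwa [eq_of_mem_basisCodes hB (hq ε) hx]
    rw [hpre]
    exact (isClosedMap_fst_of_compactSpace _ (hcl.inter (hD.preimage continuous_snd))).preimage
      continuous_subtype_val
  · exact eq_of_mem_basisCodes hB (hq _) (mk_decide_mem_basisCodes B x)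

end BasisCodes

namespace CantorCube

section Cylinder

variable {ι : Type*} {β : ι → Type*} {Z : ∀ i, Set (β i → Bool)}

def coord (x : ∀ i, Z i) (j : Σ i, β i) : Bool := (x j.1 : β j.1 → Bool) j.2

theorem continuous_coord : Continuous (coord (Z := Z)) :=
  continuous_pi fun j => (continuous_apply j.2).comp
    (continuous_subtype_val.comp (continuous_apply j.1))

theorem coord_injective : Injective (coord (Z := Z)) := fun _ _ h =>
  funext fun i => Subtype.ext <| funext fun b => congrFun h ⟨i, b⟩

def cylinderHull (L : Set (∀ i, Z i)) (G : Finset (Σ i, β i)) : Set (∀ i, Z i) :=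
  {x | ∃ l ∈ L, ∀ j ∈ G, coord l j = coord x j}

theorem subset_cylinderHull (L : Set (∀ i, Z i)) (G : Finset (Σ i, β i)) :
    L ⊆ cylinderHull L G :=
  fun l hl => ⟨l, hl, fun _ _ => rfl⟩

theorem cylinderHull_anti (L : Set (∀ i, Z i)) {G G' : Finset (Σ i, β i)} (h : G ⊆ G') :
    cylinderHull L G' ⊆ cylinderHull L G := fun _ ⟨l, hl, hlx⟩ =>
  ⟨l, hl, fun j hj => hlx j (h hj)⟩

theorem isClopen_cylinderHull (L : Set (∀ i, Z i)) (G : Finset (Σ i, β i)) :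
    IsClopen (cylinderHull L G) := by
  let ρ : (∀ i, Z i) → G → Bool := fun x j => coord x j
  have hρ : Continuous ρ := continuous_pi fun j => (continuous_apply j.1).comp continuous_coord
  have hhull : cylinderHull L G = ρ ⁻¹' (ρ '' L) := by
    ext x
    refine ⟨fun ⟨l, hl, hlx⟩ => ⟨l, hl, funext fun j => hlx j j.2⟩,
      fun ⟨l, hl, hlx⟩ => ⟨l, hl, fun j hj => congrFun hlx ⟨j, hj⟩⟩⟩
  rw [hhull]
  exact ⟨(isClosed_discrete _).preimage hρ, (isOpen_discrete _).preimage hρ⟩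

theorem exists_cylinderHull_singleton_subset [∀ i, CompactSpace (Z i)] {x : ∀ i, Z i}
    {W : Set (∀ i, Z i)} (hW : W ∈ 𝓝 x) :
    ∃ G : Finset (Σ i, β i), cylinderHull {x} G ⊆ W := by
  have hcoord : IsInducing (coord (Z := Z)) :=
    (Continuous.isClosedEmbedding (continuous_coord (Z := Z)) coord_injective).isInducing
  rw [hcoord.nhds_eq_comap, nhds_pi, Filter.mem_comap] at hW
  obtain ⟨t, ht, htW⟩ := hW
  obtain ⟨G, s, hs, hGs⟩ := Filter.mem_pi'.1 ht
  refine ⟨G, fun y ⟨_, rfl, hy⟩ => htW (hGs fun j hj => ?_)⟩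
  rw [← hy j hj]
  simpa [nhds_discrete] using hs j

theorem exists_cylinderHull_subset [∀ i, CompactSpace (Z i)] {L W : Set (∀ i, Z i)}
    (hL : IsCompact L) (hW : IsOpen W) (hLW : L ⊆ W) :
    ∃ G : Finset (Σ i, β i), cylinderHull L G ⊆ W := by
  choose! G hGW using fun x (hx : x ∈ L) =>
    exists_cylinderHull_singleton_subset (hW.mem_nhds (hLW hx))
  obtain ⟨t, htL, hLt⟩ := hL.elim_nhds_subcover (fun x => cylinderHull {x} (G x))
    fun x _ => (isClopen_cylinderHull _ _).isOpen.mem_nhds (subset_cylinderHull _ _ rfl)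
  classical
  refine ⟨t.biUnion G, fun y ⟨l, hl, hly⟩ => ?_⟩
  obtain ⟨x, hxt, x', hx', hxl⟩ := mem_iUnion₂.1 (hLt hl)
  rw [mem_singleton_iff.1 hx'] at hxl
  exact hGW x (htL x hxt)
    ⟨x, rfl, fun j hj => (hxl j hj).trans (hly j (Finset.mem_biUnion.2 ⟨x, hxt, hj⟩))⟩

theorem cylinderHull_filter_eq [DecidableEq ι] {L : Set (∀ i, Z i)}
    {F G : Finset (Σ i, β i)} {s : Finset ι} (hFs : ∀ j ∈ F, j.1 ∈ s)
    (hFG : cylinderHull L F ⊆ cylinderHull L G) :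
    cylinderHull L (G.filter (·.1 ∈ s)) = cylinderHull L G := by
  refine (cylinderHull_anti L (Finset.filter_subset _ _)).antisymm' fun x ⟨l, hl, hlx⟩ => ?_
  -- `z` lies in the `F`-hull, so in the `G`-hull, and it agrees with `x` off the blocks of `s`.
  let z : ∀ i, Z i := fun i => if i ∈ s then l i else x i
  have hz : z ∈ cylinderHull L F := ⟨l, hl, fun j hj => by simp [coord, z, hFs j hj]⟩
  obtain ⟨l', hl', hl'z⟩ := hFG hz
  refine ⟨l', hl', fun j hj => (hl'z j hj).trans ?_⟩
  by_cases hjs : j.1 ∈ s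
  · simpa [coord, z, hjs] using hlx j (Finset.mem_filter.2 ⟨hj, hjs⟩)
  · simp [coord, z, hjs]

variable {Y : Type*}

/-- The largest subset of `Y` whose preimage under `g` lies in the `G`-hull of `g ⁻¹' K`. -/
def hullNbhd (g : (∀ i, Z i) → Y) (K : Set Y) (G : Finset (Σ i, β i)) : Set Y :=
  (g '' (cylinderHull (g ⁻¹' K) G)ᶜ)ᶜ

theorem subset_hullNbhd (g : (∀ i, Z i) → Y) (K : Set Y) (G : Finset (Σ i, β i)) :
    K ⊆ hullNbhd g K G := by
  rintro y hy ⟨x, hx, rfl⟩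
  exact hx (subset_cylinderHull _ G hy)

theorem preimage_hullNbhd_subset (g : (∀ i, Z i) → Y) (K : Set Y) (G : Finset (Σ i, β i)) :
    g ⁻¹' hullNbhd g K G ⊆ cylinderHull (g ⁻¹' K) G :=
  fun x hx => by_contra fun hxG => hx ⟨x, hxG, rfl⟩

theorem isOpen_hullNbhd [∀ i, CompactSpace (Z i)] [TopologicalSpace Y] [T2Space Y]
    {g : (∀ i, Z i) → Y} (hg : Continuous g) (K : Set Y) (G : Finset (Σ i, β i)) :
    IsOpen (hullNbhd g K G) :=
  (((isClopen_cylinderHull _ G).isOpen.isClosed_compl.isCompact.image hg).isClosed).isOpen_compl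

theorem exists_hullNbhd_subset [∀ i, CompactSpace (Z i)] [TopologicalSpace Y] [T2Space Y]
    {g : (∀ i, Z i) → Y} (hg : Continuous g) (hgs : Surjective g) {K V : Set Y}
    (hK : IsCompact K) (hV : IsOpen V) (hKV : K ⊆ V) :
    ∃ G : Finset (Σ i, β i), hullNbhd g K G ⊆ V := by
  obtain ⟨G, hG⟩ := exists_cylinderHull_subset (hK.isClosed.preimage hg).isCompact
    (hV.preimage hg) (preimage_mono hKV)
  refine ⟨G, fun y hy => ?_⟩
  obtain ⟨x, rfl⟩ := hgs y
  exact hG (preimage_hullNbhd_subset g K G hy)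

end Cylinder

variable {ι : Type u} {β : ι → Type u} {Z : ∀ i, Set (β i → Bool)} [∀ i, CompactSpace (Z i)]
  {Y : Type u} [TopologicalSpace Y] [T2Space Y] {g : (∀ i, Z i) → Y}

theorem mk_hullNbhd_ssuperset_lt (hg : Continuous g) {K : Set Y} (hK : IsCompact K)
    {κ : Cardinal.{u}} (hκ : ℵ₀ ≤ κ) {ℓ : (Σ i, β i) → Ordinal.{u}} (hℓκ : ∀ j, ℓ j < κ.ord)
    (hℓ : ∀ i, Injective fun b => ℓ ⟨i, b⟩) {S : Set (Finset (Σ i, β i))}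
    (hS : ∀ F ∈ S, ∀ G ∈ S, hullNbhd g K F ⊆ hullNbhd g K G → G.sup ℓ ≤ F.sup ℓ)
    {F : Finset (Σ i, β i)} (hF : F ∈ S) :
    #{v : Set Y // v ∈ hullNbhd g K '' S ∧ hullNbhd g K F ⊂ v} < κ := by
  classical
  obtain ⟨F₁, hF₁⟩ := exists_cylinderHull_subset (hK.isClosed.preimage hg).isCompact
    ((isOpen_hullNbhd hg K F).preimage hg) (preimage_mono (subset_hullNbhd g K F))
  set s := F₁.image Sigma.fst
  set W := {j : Σ i, β i | j.1 ∈ s ∧ ℓ j ≤ F.sup ℓ}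
  have hrange : {v | v ∈ hullNbhd g K '' S ∧ hullNbhd g K F ⊂ v} ⊆
      range fun H : Finset W => hullNbhd g K (H.map (Embedding.subtype _)) := by
    rintro _ ⟨⟨G, hG, rfl⟩, hFG⟩
    have hGW : ∀ j ∈ G.filter (·.1 ∈ s), j ∈ W := fun j hj =>
      ⟨(Finset.mem_filter.1 hj).2,
        (Finset.le_sup (Finset.mem_filter.1 hj).1).trans (hS F hF G hG hFG.subset)⟩
    refine ⟨(G.filter (·.1 ∈ s)).subtype (· ∈ W), ?_⟩
    simp only [Finset.subtype_map, Finset.filter_true_of_mem hGW, hullNbhd]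
    rw [cylinderHull_filter_eq (fun j hj => Finset.mem_image_of_mem _ hj)
      (hF₁.trans ((preimage_mono hFG.subset).trans (preimage_hullNbhd_subset g K G)))]
  calc #{v : Set Y // v ∈ hullNbhd g K '' S ∧ hullNbhd g K F ⊂ v}
      ≤ #(Finset W) := (mk_le_mk_of_subset hrange).trans mk_range_le
    _ < κ := mk_finset_lt_of_mk_lt hκ (mk_setOf_fst_mem_and_le_lt hℓ s hκ
        ((Finset.sup_lt_iff (isSuccLimit_ord hκ).bot_lt).2 fun j _ => hℓκ j))

theorem exists_isNbhdBase_mk_ssuperset_lt (hg : Continuous g) (hgs : Surjective g)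
    {K : Set Y} (hK : IsCompact K) {κ : Cardinal.{u}} (hκ : ℵ₀ ≤ κ) (hβ : ∀ i, #(β i) ≤ κ) :
    ∃ A : Set (Set Y), IsNbhdBase Y K A ∧ ∀ u ∈ A, #{v : Set Y // v ∈ A ∧ u ⊂ v} < κ := by
  obtain ⟨ℓ, hℓκ, hℓ⟩ := exists_fiberwise_injective_lt_ord hβ
  set S := {F | ∀ G, hullNbhd g K G ⊆ hullNbhd g K F → F.sup ℓ ≤ G.sup ℓ}
  refine ⟨hullNbhd g K '' S, ⟨?_, fun V hV hKV => ?_⟩, ?_⟩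
  · rintro _ ⟨F, -, rfl⟩
    exact ⟨isOpen_hullNbhd hg K F, subset_hullNbhd g K F⟩
  · obtain ⟨G, hGV⟩ := exists_hullNbhd_subset hg hgs hK hV hKV
    obtain ⟨F, hFG, hF⟩ :=
      exists_le_forall_le_of_wellFoundedLT (hullNbhd g K) (·.sup ℓ) G
    exact ⟨_, ⟨F, hF, rfl⟩, hFG.trans hGV⟩
  · rintro _ ⟨F, hF, rfl⟩
    exact mk_hullNbhd_ssuperset_lt hg hK hκ hℓκ hℓ (S := S)
      (fun _ _ G hG hFG => hG _ hFG) hF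

end CantorCube

theorem exists_isTopologicalBasis_max_eq_weight (X : Type u) [TopologicalSpace X] :
    ∃ B : Set (Set X), IsTopologicalBasis B ∧ max #B ℵ₀ = weight X :=
  (csInf_mem ⟨_, _, isTopologicalBasis_opens, rfl⟩ :
    weight X ∈ {c | ∃ B : Set (Set X), IsTopologicalBasis B ∧ c = max #B ℵ₀}).imp
    fun _ ⟨hB, h⟩ => ⟨hB, h.symm⟩

theorem aleph0_le_weight (X : Type u) [TopologicalSpace X] : ℵ₀ ≤ weight X := by
  obtain ⟨B, -, hB⟩ := exists_isTopologicalBasis_max_eq_weight X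
  exact hB ▸ le_max_right _ _

theorem exists_isTopologicalBasis_mk_le_weight (X : Type u) [TopologicalSpace X] :
    ∃ B : Set (Set X), IsTopologicalBasis B ∧ #B ≤ weight X := by
  obtain ⟨B, hB, hBw⟩ := exists_isTopologicalBasis_max_eq_weight X
  exact ⟨B, hB, hBw ▸ le_max_left _ _⟩

/-- If a Hausdorff space `Y` is a continuous image of a product `∏ i, X i` of compact
Hausdorff spaces, then every compact subset of `Y` has a `(sup_i w(X i))`-op-like
neighborhood base; i.e. `χ_K Nt(Y) ≤ sup_i w(X i)`. -/
theorem compact_nbhd_base_op_like_of_image_of_product {ι : Type u} [Nonempty ι]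
    {X : ι → Type u} [∀ i, TopologicalSpace (X i)] [∀ i, CompactSpace (X i)]
    [∀ i, T2Space (X i)] {Y : Type u} [TopologicalSpace Y] [T2Space Y]
    (f : (∀ i, X i) → Y) (hf : Continuous f) (hsurj : Function.Surjective f)
    (K : Set Y) (hK : IsCompact K) :
    ∃ A : Set (Set Y), IsNbhdBase Y K A ∧
      ∀ u ∈ A, #{v : Set Y // v ∈ A ∧ u ⊂ v} < ⨆ i, weight (X i) := by
  have hweight : ∀ i, weight (X i) ≤ ⨆ i, weight (X i) := le_ciSup bddAbove_of_small
  choose B hB hBw using fun i => exists_isTopologicalBasis_mk_le_weight (X i)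
  choose Z hZ q hq hqs using fun i => (hB i).exists_isClosed_continuous_surjective
  have : ∀ i, CompactSpace (Z i) := fun i => isCompact_iff_compactSpace.1 (hZ i).isCompact
  exact CantorCube.exists_isNbhdBase_mk_ssuperset_lt (hf.comp (Continuous.piMap hq))
    (hsurj.comp (Surjective.piMap hqs)) hK
    ((aleph0_le_weight _).trans (hweight (Classical.arbitrary ι)))
    fun i => (hBw i).trans (hweight i)
end

section
/- If X is a homogeneous compact linearly ordered topological space, then every compact subset of X has an ω^op-like neighborhood base; i.e., χ_K Nt(X) = ω. -/
open Cardinal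

/-!
Homogeneity makes `X` first countable: the least point `p` has the chain of neighbourhoods
`[p, b)` as a basis, a homeomorphism carries this chain to a basis at the infimum `z` of a
strictly decreasing sequence, and a chain basis at a point approached from the right by a
sequence has a countable subbasis. In a first countable compact linear order every convex set is
the increasing union of closed intervals `[a n, b n]` that eventually contain each of its compact
subsets. Taking such intervals in the open, pairwise disjoint convex components of `Kᶜ`, the
complements of finite unions of them, one per component, form a neighbourhood base of `K`. A
member `u` lies only in members whose intervals are among the finitely many `[a m, b m]`,
`m ≤ n`, inside the intervals of `u`.
-/

open Set Filter Topology

lemma Monotone.mem_image_Iic_of_le {ι α : Type*} [LinearOrder ι] [PartialOrder α] {f : ι → α}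
    (hf : Monotone f) {m k : ι} (h : f m ≤ f k) : f m ∈ f '' Iic k := by
  rcases le_or_gt m k with hmk | hkm
  · exact ⟨m, hmk, rfl⟩
  · exact ⟨k, le_rfl, le_antisymm (hf hkm.le) h⟩

section Exhaustion

variable {X : Type*} [TopologicalSpace X]

structure IsClosedExhaustion (D : Set X) (E : ℕ → Set X) : Prop where
  monotone : Monotone E
  isClosed : ∀ n, IsClosed (E n)
  subset : ∀ n, E n ⊆ D
  exists_subset_of_isCompact : ∀ L ⊆ D, IsCompact L → ∃ n, L ⊆ E n

def exhaustionBase (𝒞 : Set (Set X)) (E : Set X → ℕ → Set X) : Set (Set X) :=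
  {u | ∃ s ⊆ 𝒞, s.Finite ∧ ∃ n : Set X → ℕ, u = (⋃ D ∈ s, E D (n D))ᶜ}

variable {𝒞 : Set (Set X)} {E : Set X → ℕ → Set X}

lemma IsClosed.inter_of_pairwiseDisjoint (h𝒞_open : ∀ D ∈ 𝒞, IsOpen D)
    (h𝒞 : 𝒞.PairwiseDisjoint id) {G : Set X} (hG : IsClosed G) (hG𝒞 : G ⊆ ⋃₀ 𝒞) {D : Set X}
    (hD : D ∈ 𝒞) : IsClosed (G ∩ D) := by
  convert hG.sdiff (isOpen_sUnion (s := 𝒞 \ {D}) fun D' hD' => h𝒞_open D' hD'.1) using 1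
  ext g
  constructor
  · rintro ⟨hg, hgD⟩
    refine ⟨hg, fun ⟨D', ⟨hD'𝒞, hD'D⟩, hgD'⟩ => hD'D ?_⟩
    exact h𝒞.elim hD'𝒞 hD (not_disjoint_iff.2 ⟨g, hgD', hgD⟩)
  · rintro ⟨hg, hgn⟩
    obtain ⟨D', hD'𝒞, hgD'⟩ := hG𝒞 hg
    refine ⟨hg, by_contra fun hgD => hgn ⟨D', ⟨hD'𝒞, ?_⟩, hgD'⟩⟩
    rintro rfl
    exact hgD hgD'

lemma isNbhdBase_exhaustionBase [CompactSpace X] {K : Set X} (h𝒞_open : ∀ D ∈ 𝒞, IsOpen D)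
    (h𝒞 : 𝒞.PairwiseDisjoint id) (h𝒞K : ⋃₀ 𝒞 = Kᶜ)
    (hE : ∀ D ∈ 𝒞, IsClosedExhaustion D (E D)) :
    IsNbhdBase X K (exhaustionBase 𝒞 E) := by
  refine ⟨?_, fun v hv hKv => ?_⟩
  · rintro _ ⟨s, hs𝒞, hs, n, rfl⟩
    refine ⟨(hs.isClosed_biUnion fun D hD => (hE D (hs𝒞 hD)).isClosed _).isOpen_compl, ?_⟩
    rw [subset_compl_comm, ← h𝒞K]
    exact iUnion₂_subset fun D hD =>
      ((hE D (hs𝒞 hD)).subset _).trans (subset_sUnion_of_mem (hs𝒞 hD))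
  · have hG : vᶜ ⊆ ⋃₀ 𝒞 := h𝒞K ▸ compl_subset_compl.2 hKv
    obtain ⟨s, hs𝒞, hs, hGs⟩ := hv.isClosed_compl.isCompact.elim_finite_subcover_image
      (c := id) h𝒞_open (by simpa only [sUnion_eq_biUnion, id] using hG)
    have hpiece : ∀ D, ∃ k, D ∈ 𝒞 → vᶜ ∩ D ⊆ E D k := fun D => by
      by_cases hD : D ∈ 𝒞
      · obtain ⟨k, hk⟩ := (hE D hD).exists_subset_of_isCompact _ inter_subset_right
          (hv.isClosed_compl.inter_of_pairwiseDisjoint h𝒞_open h𝒞 hG hD).isCompact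
        exact ⟨k, fun _ => hk⟩
      · exact ⟨0, fun h => absurd h hD⟩
    choose n hn using hpiece
    refine ⟨_, ⟨s, hs𝒞, hs, n, rfl⟩, compl_subset_comm.1 fun g hg => ?_⟩
    obtain ⟨D, hDs, hgD⟩ := mem_iUnion₂.1 (hGs hg)
    exact mem_iUnion₂.2 ⟨D, hDs, hn D (hs𝒞 hDs) ⟨hg, hgD⟩⟩

lemma finite_setOf_ssuperset_mem_exhaustionBase (h𝒞 : 𝒞.PairwiseDisjoint id)
    (hE : ∀ D ∈ 𝒞, IsClosedExhaustion D (E D)) {u : Set X} (hu : u ∈ exhaustionBase 𝒞 E) :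
    {v | v ∈ exhaustionBase 𝒞 E ∧ u ⊂ v}.Finite := by
  obtain ⟨s, hs𝒞, hs, n, rfl⟩ := hu
  set F : Set (Set X) := insert ∅ (⋃ D ∈ s, E D '' Iic (n D))
  have hF : F.Finite := (hs.biUnion fun D _ => (finite_Iic _).image _).insert ∅
  refine (hF.finite_subsets.image fun P : Set (Set X) => (⋃₀ P)ᶜ).subset ?_
  rintro _ ⟨⟨s', hs'𝒞, -, n', rfl⟩, huv⟩
  refine ⟨(fun D => E D (n' D)) '' s', ?_, by simp only [sUnion_image]⟩
  rintro _ ⟨D, hDs', rfl⟩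
  have hcov : E D (n' D) ⊆ ⋃ D' ∈ s, E D' (n D') :=
    (subset_biUnion_of_mem (u := fun D => E D (n' D)) hDs').trans
      (compl_subset_compl.1 huv.subset)
  -- the pieces are disjoint, so `E D (n' D)` can only meet the set `E D (n D)` of `u`
  have hmem : ∀ q ∈ E D (n' D), D ∈ s ∧ q ∈ E D (n D) := by
    intro q hq
    obtain ⟨D', hD's, hqD'⟩ := mem_iUnion₂.1 (hcov hq)
    obtain rfl : D' = D := h𝒞.elim (hs𝒞 hD's) (hs'𝒞 hDs') (not_disjoint_iff.2
      ⟨q, (hE D' (hs𝒞 hD's)).subset _ hqD', (hE D (hs'𝒞 hDs')).subset _ hq⟩)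
    exact ⟨hD's, hqD'⟩
  rcases (E D (n' D)).eq_empty_or_nonempty with hempty | ⟨q, hq⟩
  · show E D (n' D) ∈ F
    rw [hempty]
    exact mem_insert _ _
  · have hDs := (hmem q hq).1
    exact mem_insert_of_mem _ <| mem_biUnion hDs <|
      (hE D (hs'𝒞 hDs')).monotone.mem_image_Iic_of_le fun q hq => (hmem q hq).2

theorem exists_nhdsBase_finite_ssupersets [CompactSpace X] {K : Set X}
    (h𝒞_open : ∀ D ∈ 𝒞, IsOpen D) (h𝒞 : 𝒞.PairwiseDisjoint id) (h𝒞K : ⋃₀ 𝒞 = Kᶜ)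
    (hexh : ∀ D ∈ 𝒞, ∃ E, IsClosedExhaustion D E) :
    ∃ A : Set (Set X), IsNbhdBase X K A ∧ ∀ u ∈ A, {v | v ∈ A ∧ u ⊂ v}.Finite := by
  choose! E hE using hexh
  exact ⟨exhaustionBase 𝒞 E, isNbhdBase_exhaustionBase h𝒞_open h𝒞 h𝒞K hE,
    fun u hu => finite_setOf_ssuperset_mem_exhaustionBase h𝒞 hE hu⟩

end Exhaustion

section LinearOrder

variable {X : Type*} [LinearOrder X] [TopologicalSpace X] [OrderTopology X]

lemma isCountablyGenerated_nhds_of_monotone_basis {ι : Type*} [LinearOrder ι] {x : X}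
    {p : ι → Prop} {s : ι → Set X} (hs : (𝓝 x).HasBasis p s) (hmono : Monotone s)
    {y : ℕ → X} (hxy : ∀ n, x < y n) (hglb : IsGLB (range y) x) :
    (𝓝 x).IsCountablyGenerated := by
  choose i hip his using fun n => hs.mem_iff.1 (Iio_mem_nhds (hxy n))
  refine HasBasis.isCountablyGenerated (ι := ℕ) (p := fun _ => True) (s := fun n => s (i n))
    ⟨fun t => ⟨fun ht => ?_, fun ⟨n, _, hn⟩ => mem_of_superset (hs.mem_of_mem (hip n)) hn⟩⟩
  obtain ⟨j, hjp, hjt⟩ := hs.mem_iff.1 ht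
  suffices ∃ n, i n ≤ j from this.imp fun n hn => ⟨trivial, (hmono hn).trans hjt⟩
  -- otherwise `s j ⊆ Iio (y n)` for all `n`, but `s j` contains some `y n`
  by_contra! hlt
  obtain ⟨l, hxl, hl⟩ := exists_Ico_subset_of_mem_nhds (hs.mem_of_mem hjp) ⟨y 0, hxy 0⟩
  obtain ⟨_, ⟨n, rfl⟩, -, hnl⟩ := hglb.exists_between hxl
  exact lt_irrefl _ (his n (hmono (hlt n).le (hl ⟨(hxy n).le, hnl⟩)))

lemma exists_strictAnti_gt_of_not_isOpen_singleton {p : X} (hp : IsBot p)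
    (hiso : ¬IsOpen {p}) : ∃ y : ℕ → X, StrictAnti y ∧ ∀ n, p < y n := by
  have hgap : ∀ c, p < c → ∃ d, p < d ∧ d < c := by
    intro c hc
    by_contra! h
    have hIio : Iio c = {p} := eq_singleton_iff_unique_mem.2
      ⟨hc, fun x hx => (le_of_not_gt fun hpx => (h x hpx).not_gt hx).antisymm (hp x)⟩
    exact hiso (hIio ▸ isOpen_Iio)
  have hne : ∃ c, p < c := by
    by_contra! h
    have huniv : (Set.univ : Set X) = {p} :=
      eq_singleton_iff_unique_mem.2 ⟨trivial, fun x _ => (h x).antisymm (hp x)⟩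
    exact hiso (huniv ▸ isOpen_univ)
  have : Nonempty (Ioi p) := hne.elim fun c hc => ⟨⟨c, hc⟩⟩
  have : NoMinOrder (Ioi p) :=
    ⟨fun c => (hgap c c.2).elim fun d hd => ⟨⟨d, hd.1⟩, hd.2⟩⟩
  obtain ⟨y, hy⟩ := Nat.exists_strictAnti (Ioi p)
  exact ⟨fun n => y n, fun _ _ h => hy h, fun n => (y n).2⟩

theorem firstCountableTopology_of_homogeneous [CompactSpace X]
    (hhomog : ∀ x y : X, ∃ h : X ≃ₜ X, h x = y) : FirstCountableTopology X := by
  have transfer : ∀ a b : X, (𝓝 a).IsCountablyGenerated → (𝓝 b).IsCountablyGenerated := by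
    intro a b _
    obtain ⟨h, rfl⟩ := hhomog b a
    rw [h.isInducing.nhds_eq_comap]
    infer_instance
  refine ⟨fun x => ?_⟩
  obtain ⟨p, -, hp⟩ := isCompact_univ.exists_isLeast ⟨x, Set.mem_univ x⟩
  refine transfer p x ?_
  by_cases hiso : IsOpen {p}
  · rw [(isOpen_singleton_iff_nhds_eq_pure p).1 hiso]
    infer_instance
  obtain ⟨y, hy, hpy⟩ :=
    exists_strictAnti_gt_of_not_isOpen_singleton (fun a => hp (Set.mem_univ a)) hiso
  obtain ⟨z, -, hz⟩ := isClosed_closure.isCompact.exists_isGLB (range_nonempty y).closure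
  rw [IsGLB, lowerBounds_closure] at hz
  have hzy : ∀ n, z < y n := fun n => (hz.1 ⟨n + 1, rfl⟩).trans_lt (hy (Nat.lt_succ_self n))
  have hbasis : (𝓝 p).HasBasis (fun b => p < b) (Ico p) := by
    have hIci : Ici p = Set.univ := eq_univ_of_forall fun a => hp (Set.mem_univ a)
    simpa [hIci] using nhdsGE_basis_of_exists_gt ⟨y 0, hpy 0⟩
  obtain ⟨h, rfl⟩ := hhomog p z
  have hbasis_z : (𝓝 (h p)).HasBasis (fun b => p < b) (fun b => h '' Ico p b) := by
    simpa only [h.map_nhds_eq] using hbasis.map h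
  exact transfer (h p) p (isCountablyGenerated_nhds_of_monotone_basis hbasis_z
    (fun a b hab => image_mono (Ico_subset_Ico_right hab)) hzy hz)

lemma Set.Nonempty.exists_monotone_seq_cofinal [CompactSpace X] [FirstCountableTopology X]
    {D : Set X} (hD : D.Nonempty) :
    ∃ b : ℕ → X, Monotone b ∧ (∀ n, b n ∈ D) ∧ ∀ d ∈ D, ∃ n, d ≤ b n := by
  obtain ⟨s, hs, hs_ub⟩ := isClosed_closure.isCompact.exists_isGreatest hD.closure
  have hcofinal : ∃ u : ℕ → X, (∀ n, u n ∈ D) ∧ ∀ d ∈ D, ∃ n, d ≤ u n := by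
    by_cases hsD : s ∈ D
    · exact ⟨fun _ => s, fun _ => hsD, fun d hd => ⟨0, hs_ub (subset_closure hd)⟩⟩
    obtain ⟨u, huD, hu⟩ := mem_closure_iff_seq_limit.1 hs
    refine ⟨u, huD, fun d hd => ?_⟩
    have hds : d < s := (hs_ub (subset_closure hd)).lt_of_ne (ne_of_mem_of_not_mem hd hsD)
    exact (hu.eventually (lt_mem_nhds hds)).exists.imp fun _ => le_of_lt
  obtain ⟨u, huD, hu⟩ := hcofinal
  refine ⟨partialSups u, (partialSups u).monotone, fun n => ?_, fun d hd => ?_⟩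
  · obtain ⟨j, -, hj⟩ := exists_partialSups_eq u n
    exact hj ▸ huD j
  · obtain ⟨n, hn⟩ := hu d hd
    exact ⟨n, hn.trans (le_partialSups u n)⟩

lemma Set.OrdConnected.exists_isClosedExhaustion [CompactSpace X] [FirstCountableTopology X]
    {D : Set X} (hD : D.OrdConnected) : ∃ E, IsClosedExhaustion D E := by
  rcases D.eq_empty_or_nonempty with rfl | hne
  · exact ⟨fun _ => ∅, monotone_const, fun _ => isClosed_empty, fun _ => subset_rfl,
      fun L hL _ => ⟨0, hL⟩⟩
  obtain ⟨b, hb_mono, hbD, hb⟩ := hne.exists_monotone_seq_cofinal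
  have : CompactSpace Xᵒᵈ := ‹CompactSpace X›
  obtain ⟨a, ha_anti, haD, ha⟩ :
      ∃ a : ℕ → X, Antitone a ∧ (∀ n, a n ∈ D) ∧ ∀ d ∈ D, ∃ n, a n ≤ d :=
    Set.Nonempty.exists_monotone_seq_cofinal (X := Xᵒᵈ) hne
  refine ⟨fun n => Icc (a n) (b n), fun m n hmn => Icc_subset_Icc (ha_anti hmn) (hb_mono hmn),
    fun n => isClosed_Icc, fun n => hD.out (haD n) (hbD n), fun L hLD hL => ?_⟩
  rcases L.eq_empty_or_nonempty with rfl | hLne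
  · exact ⟨0, empty_subset _⟩
  obtain ⟨m, hmL, hm⟩ := hL.exists_isLeast hLne
  obtain ⟨M, hML, hM⟩ := hL.exists_isGreatest hLne
  obtain ⟨i, hi⟩ := ha m (hLD hmL)
  obtain ⟨j, hj⟩ := hb M (hLD hML)
  exact ⟨max i j, fun x hx => ⟨(ha_anti (le_max_left i j)).trans (hi.trans (hm hx)),
    (hM hx).trans (hj.trans (hb_mono (le_max_right i j)))⟩⟩

lemma IsOpen.ordConnectedComponent {s : Set X} (hs : IsOpen s) (x : X) :
    IsOpen (ordConnectedComponent s x) := by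
  refine isOpen_iff_mem_nhds.2 fun z hz => ?_
  rw [ordConnectedComponent_eq (mem_ordConnectedComponent.1 hz), ordConnectedComponent_mem_nhds]
  exact hs.mem_nhds (ordConnectedComponent_subset hz)

end LinearOrder

lemma Set.pairwiseDisjoint_range_ordConnectedComponent {α : Type*} [LinearOrder α] (s : Set α) :
    (range (ordConnectedComponent s)).PairwiseDisjoint id := by
  rintro _ ⟨x, rfl⟩ _ ⟨y, rfl⟩ hne
  refine disjoint_left.2 fun z hzx hzy => hne ?_
  rw [ordConnectedComponent_eq hzx, ordConnectedComponent_eq hzy]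

lemma Set.sUnion_range_ordConnectedComponent {α : Type*} [LinearOrder α] (s : Set α) :
    ⋃₀ range (ordConnectedComponent s) = s := by
  rw [sUnion_range]
  exact (iUnion_subset fun x => ordConnectedComponent_subset).antisymm
    fun x hx => mem_iUnion.2 ⟨x, self_mem_ordConnectedComponent.2 hx⟩

/-- If `X` is a homogeneous compact linearly ordered topological space, then every
compact subset of `X` has an `ω`-op-like neighborhood base (no member contained in
infinitely many members); i.e. `χ_K Nt(X) = ω`. -/
theorem homogeneous_ordered_compactum_compactNt_omega {X : Type u} [LinearOrder X]
    [TopologicalSpace X] [OrderTopology X] [CompactSpace X]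
    (hhomog : ∀ x y : X, ∃ h : X ≃ₜ X, h x = y)
    (K : Set X) (hK : IsCompact K) :
    ∃ A : Set (Set X), IsNbhdBase X K A ∧ ∀ u ∈ A, {v | v ∈ A ∧ u ⊂ v}.Finite := by
  have := firstCountableTopology_of_homogeneous hhomog
  refine exists_nhdsBase_finite_ssupersets (𝒞 := range (ordConnectedComponent Kᶜ)) ?_
    (pairwiseDisjoint_range_ordConnectedComponent Kᶜ) (sUnion_range_ordConnectedComponent Kᶜ) ?_
  · rintro _ ⟨x, rfl⟩
    exact hK.isClosed.isOpen_compl.ordConnectedComponent x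
  · rintro _ ⟨x, rfl⟩
    exact Set.OrdConnected.exists_isClosedExhaustion inferInstance
end

section
/- Let X be a compact metric space with base A. Then there exists B ⊆ A such that: (1) B is a base of X; (2) no member of B is contained in infinitely many members of B; (3) if U, V ∈ B and U ⊊ V then closure(U) ⊆ V; and (4) for every finite Γ ⊆ B there are only finitely many U ∈ B such that {V ∈ B : U ⊊ V} ⊆ Γ. In particular, every compact metric space has Noetherian type ω. -/
open Cardinal TopologicalSpace Metric Set

universe u

theorem my_step_lemma {X : Type u} [MetricSpace X] {A : Set (Set X)}
    (hA : IsTopologicalBasis A) (G : Finset (Set X)) (hG : ∀ W ∈ G, IsOpen W)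
    (z : X) (ε : ℝ) (hε : 0 < ε) :
    ∃ U ∈ A, z ∈ U ∧ U ⊆ ball z ε ∧ (∀ W ∈ G, z ∈ W → closure U ⊆ W) ∧
      (∀ W ∈ G, (W \ {z}).Nonempty → ¬ W ⊆ U) := by
  classical
  set e : Set X → Set X := fun W =>
    if h : (W \ {z}).Nonempty then {h.choose} else ∅ with he
  have heW : ∀ W, e W ⊆ W \ {z} := by
    intro W
    simp only [he]
    split
    · next h => intro p hp; simp only [mem_singleton_iff] at hp; exact hp ▸ h.choose_spec
    · exact empty_subset _
  set E : Set X := ⋃ W ∈ G, e W with hE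
  have hEfin : E.Finite := by
    apply Set.Finite.biUnion G.finite_toSet
    intro W _
    simp only [he]
    split
    · exact finite_singleton _
    · exact finite_empty
  have hEW : E ⊆ ⋃ W ∈ G, (W \ {z}) := by
    apply Set.iUnion₂_mono
    intro W _; exact heW W
  have hzE : z ∉ E := by
    intro hz
    obtain ⟨W, hW, hzW⟩ := mem_iUnion₂.mp (hEW hz)
    exact hzW.2 rfl
  set S : Set X := ⋂ W ∈ {W ∈ (G : Set (Set X)) | z ∈ W}, W with hS
  have hSopen : IsOpen S := by
    apply Set.Finite.isOpen_biInter (G.finite_toSet.subset (sep_subset _ _))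
    intro W hW; exact hG W hW.1
  have hzS : z ∈ S := by
    apply mem_biInter; intro W hW; exact hW.2
  set O : Set X := (S ∩ ball z ε) \ E with hO
  have hOopen : IsOpen O := (hSopen.inter isOpen_ball).sdiff hEfin.isClosed
  have hzO : z ∈ O := ⟨⟨hzS, mem_ball_self hε⟩, hzE⟩
  obtain ⟨r, hr0, hrO⟩ := Metric.nhds_basis_closedBall.mem_iff.mp (hOopen.mem_nhds hzO)
  obtain ⟨U, hUA, hzU, hUb⟩ := hA.exists_subset_of_mem_open (mem_ball_self hr0) isOpen_ball
  have hclU : closure U ⊆ O :=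
    (closure_mono hUb).trans (closure_ball_subset_closedBall.trans hrO)
  have hUO : U ⊆ O := subset_closure.trans hclU
  refine ⟨U, hUA, hzU, ?_, ?_, ?_⟩
  · exact hUO.trans (fun x hx => hx.1.2)
  · intro W hW hzW
    intro x hx
    have hxS : x ∈ S := (hclU hx).1.1
    exact mem_iInter₂.mp hxS W ⟨hW, hzW⟩
  · intro W hW hne hWU
    have hp : hne.choose ∈ E := by
      apply mem_iUnion₂.mpr ⟨W, hW, ?_⟩
      simp [he, hne]
    have hpW : hne.choose ∈ W := hne.choose_spec.1
    have := hUO (hWU hpW)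
    exact this.2 hp

theorem my_stage_lemma {X : Type u} [MetricSpace X] [CompactSpace X] {A : Set (Set X)}
    (hA : IsTopologicalBasis A) (G : Finset (Set X)) (hG : ∀ W ∈ G, IsOpen W)
    (ε : ℝ) (hε : 0 < ε) :
    ∃ F : Finset (Set X), ↑F ⊆ A ∧ (∀ x : X, ∃ U ∈ F, x ∈ U) ∧
      (∀ U ∈ F, ∀ V ∈ F, U ⊆ V → U = V) ∧
      (∀ U ∈ F, ∃ z, z ∈ U ∧ U ⊆ ball z ε ∧
        (∀ W ∈ G, z ∈ W → closure U ⊆ W) ∧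
        (∀ W ∈ G, (W \ {z}).Nonempty → ¬ W ⊆ U)) := by
  classical
  have h1 : ∀ z : X, ∃ U, U ∈ A ∧ z ∈ U ∧ U ⊆ ball z ε ∧
      (∀ W ∈ G, z ∈ W → closure U ⊆ W) ∧
      (∀ W ∈ G, (W \ {z}).Nonempty → ¬ W ⊆ U) := by
    intro z
    obtain ⟨U, hUA, h⟩ := my_step_lemma hA G hG z ε hε
    exact ⟨U, hUA, h⟩
  choose u hu1 hu2 hu3 hu4 hu5 using h1
  obtain ⟨t, ht⟩ := isCompact_univ.elim_finite_subcover u (fun z => hA.isOpen (hu1 z))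
    (fun x _ => mem_iUnion.mpr ⟨x, hu2 x⟩)
  set Φ : Finset (Set X) → Prop := fun F =>
    (∀ U ∈ F, ∃ z, U = u z) ∧ ∀ x : X, ∃ U ∈ F, x ∈ U with hΦ
  have hΦ0 : Φ (t.image u) := by
    constructor
    · intro U hU
      obtain ⟨z, _, hz⟩ := Finset.mem_image.mp hU
      exact ⟨z, hz.symm⟩
    · intro x
      have := ht (mem_univ x)
      simp only [mem_iUnion, exists_prop] at this
      obtain ⟨z, hz, hxz⟩ := this
      exact ⟨u z, Finset.mem_image_of_mem u hz, hxz⟩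
  have hex : ∃ n, ∃ F, Φ F ∧ F.card = n := ⟨_, _, hΦ0, rfl⟩
  obtain ⟨F, hF, hcard⟩ := Nat.find_spec hex
  have hanti : ∀ U ∈ F, ∀ V ∈ F, U ⊆ V → U = V := by
    intro U hU V hV hUV
    by_contra hne
    have hΦ' : Φ (F.erase U) := by
      constructor
      · intro W hW; exact hF.1 W (Finset.mem_of_mem_erase hW)
      · intro x
        obtain ⟨W, hW, hxW⟩ := hF.2 x
        by_cases h : W = U
        · exact ⟨V, Finset.mem_erase.mpr ⟨fun hVU => hne hVU.symm, hV⟩, hUV (h ▸ hxW)⟩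
        · exact ⟨W, Finset.mem_erase.mpr ⟨h, hW⟩, hxW⟩
    have hlt : (F.erase U).card < Nat.find hex := by
      rw [Finset.card_erase_of_mem hU, hcard]
      have hpos : 0 < F.card := Finset.card_pos.mpr ⟨U, hU⟩
      rw [← hcard]
      exact Nat.sub_lt hpos one_pos
    exact Nat.find_min hex hlt ⟨F.erase U, hΦ', rfl⟩
  refine ⟨F, ?_, hF.2, hanti, ?_⟩
  · intro U hU
    obtain ⟨z, rfl⟩ := hF.1 U hU
    exact hu1 z
  · intro U hU
    obtain ⟨z, rfl⟩ := hF.1 U hU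
    exact ⟨z, hu2 z, hu3 z, hu4 z, hu5 z⟩


/-- The Noetherian type of `X`: the least infinite `κ` such that `X` has a base in
which no member is (strictly) contained in `κ`-many members. -/
noncomputable def noetherianType (X : Type u) [TopologicalSpace X] : Cardinal.{u} :=
  sInf {κ | ℵ₀ ≤ κ ∧ ∃ B : Set (Set X), IsTopologicalBasis B ∧
    ∀ u ∈ B, #{v : Set X // v ∈ B ∧ u ⊂ v} < κ}

/-- Let `X` be a compact metric space with base `A`.  Then there is `B ⊆ A` such that:
(1) `B` is a base of `X`; (2) no member of `B` is contained in infinitely many members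
of `B`; (3) if `U, V ∈ B` and `U ⊊ V` then `closure U ⊆ V`; (4) for every finite
`Γ ⊆ B` only finitely many `U ∈ B` satisfy `{V ∈ B : U ⊊ V} ⊆ Γ`.  In particular,
every compact metric space has Noetherian type `ω`. -/
theorem compact_metric_base_refinement {X : Type u} [MetricSpace X] [CompactSpace X]
    (A : Set (Set X)) (hA : IsTopologicalBasis A) :
    (∃ B ⊆ A, IsTopologicalBasis B ∧
      (∀ U ∈ B, {V | V ∈ B ∧ U ⊂ V}.Finite) ∧
      (∀ U ∈ B, ∀ V ∈ B, U ⊂ V → closure U ⊆ V) ∧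
      (∀ Γ : Set (Set X), Γ ⊆ B → Γ.Finite →
        {U | U ∈ B ∧ {V | V ∈ B ∧ U ⊂ V} ⊆ Γ}.Finite)) ∧
    noetherianType X = ℵ₀ := by
  classical
  -- total version of the stage lemma, for recursion via choice
  have stage_total : ∀ (G : Finset (Set X)) (n : ℕ), ∃ F : Finset (Set X),
      (∀ W ∈ G, IsOpen W) → (↑F ⊆ A ∧ (∀ x : X, ∃ U ∈ F, x ∈ U) ∧
        (∀ U ∈ F, ∀ V ∈ F, U ⊆ V → U = V) ∧
        (∀ U ∈ F, ∃ z, z ∈ U ∧ U ⊆ ball z ((1/2 : ℝ)^n) ∧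
          (∀ W ∈ G, z ∈ W → closure U ⊆ W) ∧
          (∀ W ∈ G, (W \ {z}).Nonempty → ¬ W ⊆ U))) := by
    intro G n
    by_cases h : ∀ W ∈ G, IsOpen W
    · obtain ⟨F, hF⟩ := my_stage_lemma hA G h ((1/2 : ℝ)^n) (by positivity)
      exact ⟨F, fun _ => hF⟩
    · exact ⟨∅, fun h' => absurd h' h⟩
  choose Fc hFc using stage_total
  -- the cumulative families
  let g : ℕ → Finset (Set X) := fun n => Nat.rec ∅ (fun k gk => gk ∪ Fc gk k) n
  have hgsucc : ∀ n, g (n+1) = g n ∪ Fc (g n) n := fun n => rfl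
  have hgA : ∀ n, ∀ W ∈ g n, W ∈ A := by
    intro n
    induction n with
    | zero => intro W hW; exact absurd hW (Finset.notMem_empty W)
    | succ k ih =>
      intro W hW
      rw [hgsucc] at hW
      rcases Finset.mem_union.mp hW with h | h
      · exact ih W h
      · exact (hFc (g k) k (fun W' hW' => hA.isOpen (ih W' hW'))).1 h
  set F : ℕ → Finset (Set X) := fun n => Fc (g n) n with hFdef
  have hΨ : ∀ n, ↑(F n) ⊆ A ∧ (∀ x : X, ∃ U ∈ F n, x ∈ U) ∧
      (∀ U ∈ F n, ∀ V ∈ F n, U ⊆ V → U = V) ∧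
      (∀ U ∈ F n, ∃ z, z ∈ U ∧ U ⊆ ball z ((1/2 : ℝ)^n) ∧
        (∀ W ∈ g n, z ∈ W → closure U ⊆ W) ∧
        (∀ W ∈ g n, (W \ {z}).Nonempty → ¬ W ⊆ U)) :=
    fun n => hFc (g n) n (fun W hW => hA.isOpen (hgA n W hW))
  have hFsub : ∀ n, F n ⊆ g (n+1) := by
    intro n; rw [hgsucc]; exact Finset.subset_union_right
  have hgmono : ∀ {m n : ℕ}, m ≤ n → g m ⊆ g n := by
    intro m n h
    induction h with
    | refl => exact Finset.Subset.refl _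
    | step h ih => exact ih.trans (by rw [hgsucc]; exact Finset.subset_union_left)
  have hgF : ∀ n U, U ∈ g n → ∃ j, U ∈ F j := by
    intro n
    induction n with
    | zero => intro U hU; exact absurd hU (Finset.notMem_empty U)
    | succ k ih =>
      intro U hU
      rw [hgsucc] at hU
      rcases Finset.mem_union.mp hU with h | h
      · exact ih U h
      · exact ⟨k, h⟩
  set B : Set (Set X) := {U | ∃ n, U ∈ F n} with hBdef
  have hBA : B ⊆ A := by rintro U ⟨n, hn⟩; exact (hΨ n).1 hn
  have hFB : ∀ n, ∀ U ∈ F n, U ∈ B := fun n U hU => ⟨n, hU⟩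
  -- basis
  have hbasis : IsTopologicalBasis B := by
    apply isTopologicalBasis_of_isOpen_of_nhds (fun U hU => hA.isOpen (hBA hU))
    intro x O hxO hO
    obtain ⟨δ, hδ, hball⟩ := Metric.isOpen_iff.mp hO x hxO
    obtain ⟨n, hn⟩ := exists_pow_lt_of_lt_one (by positivity : (0:ℝ) < δ/2)
      (by norm_num : (1/2 : ℝ) < 1)
    obtain ⟨U, hUF, hxU⟩ := (hΨ n).2.1 x
    obtain ⟨z, hzU, hUball, -, -⟩ := (hΨ n).2.2.2 U hUF
    refine ⟨U, hFB n U hUF, hxU, fun y hy => hball ?_⟩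
    have h1 : dist y z < (1/2:ℝ)^n := hUball hy
    have h2 : dist x z < (1/2:ℝ)^n := hUball hxU
    have : dist y x ≤ dist y z + dist x z := dist_triangle_right y x z
    rw [mem_ball]
    calc dist y x ≤ dist y z + dist x z := this
      _ < δ/2 + δ/2 := by linarith
      _ = δ := by ring
  -- key: every strict superset of U lies in g (first stage of U)
  have key : ∀ U, ∀ hU : ∃ n, U ∈ F n, ∀ V ∈ B, U ⊂ V → V ∈ g (Nat.find hU) := by
    intro U hU V hV hUV
    obtain ⟨k, hVk⟩ := hV
    set m := Nat.find hU with hm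
    have hUm : U ∈ F m := Nat.find_spec hU
    rcases lt_trichotomy k m with hk | hk | hk
    · exact hgmono hk (hFsub k hVk)
    · rw [hk] at hVk
      exact absurd ((hΨ m).2.2.1 U hUm V hVk hUV.subset) hUV.ne
    · exfalso
      obtain ⟨zV, hzV, -, hiii, hiv⟩ := (hΨ k).2.2.2 V hVk
      have hUgk : U ∈ g k := hgmono hk (hFsub m hUm)
      by_cases hne : (U \ {zV}).Nonempty
      · exact hiv U hUgk hne hUV.subset
      · obtain ⟨zU, hzU, -, -, -⟩ := (hΨ m).2.2.2 U hUm
        have hUz : U = {zV} := by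
          rw [not_nonempty_iff_eq_empty, diff_eq_empty] at hne
          exact hne.antisymm (singleton_subset_iff.mpr (by
            have := hne hzU
            simp only [mem_singleton_iff] at this
            exact this ▸ hzU))
        have hzVU : zV ∈ U := by rw [hUz]; exact rfl
        have hclVU : closure V ⊆ U := hiii U hUgk hzVU
        exact hUV.not_subset (subset_closure.trans hclVU)
  -- condition (2)
  have cond2 : ∀ U ∈ B, {V | V ∈ B ∧ U ⊂ V}.Finite := by
    intro U hU
    exact ((g (Nat.find hU)).finite_toSet).subset
      (fun V hV => key U hU V hV.1 hV.2)
  -- condition (3)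
  have cond3 : ∀ U ∈ B, ∀ V ∈ B, U ⊂ V → closure U ⊆ V := by
    intro U hU V hV hUV
    have hVg := key U hU V hV hUV
    obtain ⟨z, hzU, -, hiii, -⟩ := (hΨ (Nat.find hU)).2.2.2 U (Nat.find_spec hU)
    exact hiii V hVg (hUV.subset hzU)
  -- condition (4)
  have cond4 : ∀ Γ : Set (Set X), Γ ⊆ B → Γ.Finite →
      {U | U ∈ B ∧ {V | V ∈ B ∧ U ⊂ V} ⊆ Γ}.Finite := by
    intro Γ hΓB hΓfin
    obtain ⟨N, hN⟩ : ∃ N, ∀ γ ∈ Γ, γ ∈ g N := by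
      have h : ∀ γ : Γ, ∃ n, (γ : Set X) ∈ g n := fun γ => by
        obtain ⟨k, hk⟩ := hΓB γ.2
        exact ⟨k + 1, hFsub k hk⟩
      choose nf hnf using h
      have : Finite Γ := hΓfin
      obtain ⟨N, hNbd⟩ := Finite.exists_le nf
      exact ⟨N, fun γ hγ => hgmono (hNbd ⟨γ, hγ⟩) (hnf ⟨γ, hγ⟩)⟩
    apply ((g (N+2)).finite_toSet).subset
    rintro U ⟨hUB, hsup⟩
    by_contra hUg
    have hU : ∃ n, U ∈ F n := hUB
    set m := Nat.find hU with hm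
    have hUm : U ∈ F m := Nat.find_spec hU
    have hmN : N + 2 ≤ m := by
      by_contra h
      push_neg at h
      exact hUg (hgmono (Nat.succ_le_of_lt h) (hFsub m hUm))
    have hm0 : 0 < m := lt_of_lt_of_le (by norm_num) hmN
    obtain ⟨z, hzU, -, hiiiU, -⟩ := (hΨ m).2.2.2 U hUm
    obtain ⟨W, hWF, hzW⟩ := (hΨ (m-1)).2.1 z
    have hm1 : m - 1 + 1 = m := Nat.succ_pred_eq_of_pos hm0
    have hWg : W ∈ g m := by rw [← hm1]; exact hFsub (m-1) hWF
    have hUW : U ⊆ W := subset_closure.trans (hiiiU W hWg hzW)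
    have hneUW : U ≠ W := by
      intro h
      have hUf : U ∈ F (m-1) := h ▸ hWF
      have hlt : m - 1 < m := Nat.sub_lt hm0 one_pos
      rw [hm] at hUf hlt
      exact Nat.find_min hU hlt hUf
    have hUWs : U ⊂ W := ssubset_iff_subset_ne.mpr ⟨hUW, hneUW⟩
    have hWΓ : W ∈ Γ := hsup ⟨hFB (m-1) W hWF, hUWs⟩
    have hWgN : W ∈ g N := hN W hWΓ
    obtain ⟨zW, hzWW, -, -, hivW⟩ := (hΨ (m-1)).2.2.2 W hWF
    have hWgm1 : W ∈ g (m-1) := hgmono (Nat.le_pred_of_lt (lt_of_lt_of_le (by norm_num) hmN)) hWgN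
    have hne2 : (W \ {zW}).Nonempty := by
      by_cases h : z = zW
      · obtain ⟨w, hwW, hwU⟩ := exists_of_ssubset hUWs
        refine ⟨w, hwW, fun he => hwU ?_⟩
        rw [mem_singleton_iff] at he
        rw [he, ← h]
        exact hzU
      · exact ⟨z, hzW, fun he => h (mem_singleton_iff.mp he)⟩
    exact hivW W hWgm1 hne2 (subset_refl W)
  refine ⟨⟨B, hBA, hbasis, cond2, cond3, cond4⟩, ?_⟩
  have hmem : (ℵ₀ : Cardinal.{u}) ∈ {κ | ℵ₀ ≤ κ ∧ ∃ B : Set (Set X),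
      IsTopologicalBasis B ∧ ∀ u ∈ B, #{v : Set X // v ∈ B ∧ u ⊂ v} < κ} := by
    refine ⟨le_refl _, B, hbasis, fun u hu => ?_⟩
    exact Cardinal.lt_aleph0_iff_set_finite.mpr (cond2 u hu)
  unfold noetherianType
  exact le_antisymm (csInf_le' hmem)
    (le_csInf ⟨_, hmem⟩ (fun κ hκ => hκ.1))
end

section
/- Suppose κ is a regular uncountable cardinal and P is a directed partial order such that [κ]^{<ω} (ordered by ⊆) is Tukey reducible to P. Then P contains κ-many pairwise incomparable elements. -/
open Cardinal

/-- Tukey reducibility: `P ≤_T Q` iff there is a map `f : P → Q` such that the preimage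
of every bounded set is bounded (equivalently, whenever the image of `S` is bounded,
so is `S`). -/
def TukeyLE (P Q : Type*) [Preorder P] [Preorder Q] : Prop :=
  ∃ f : P → Q, ∀ S : Set P, BddAbove (f '' S) → BddAbove S

/-- If `κ` is a regular uncountable cardinal, `P` is a directed partial order, and
`[κ]^{<ω}` (finite subsets of a set of size `κ`, ordered by `⊆`) is Tukey reducible to
`P`, then `P` contains `κ`-many pairwise incomparable elements. -/
theorem antichain_of_tukey_finsets {K : Type u} {P : Type u} [PartialOrder P]
    (κ : Cardinal.{u}) (hK : #K = κ) (hreg : κ.IsRegular) (huncount : ℵ₀ < κ)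
    (hdir : ∀ a b : P, ∃ c : P, a ≤ c ∧ b ≤ c)
    (htukey : TukeyLE (Finset K) P) :
    ∃ S : Set P, #S = κ ∧
      ∀ a ∈ S, ∀ b ∈ S, a ≠ b → ¬ a ≤ b ∧ ¬ b ≤ a := by
  classical
  obtain ⟨f, hf⟩ := htukey
  set g : K → P := fun k => f {k} with hg
  -- all "down-sets" of singles are finite
  have hdown : ∀ p : P, {k : K | g k ≤ p}.Finite := by
    intro p
    have hb : BddAbove (f '' {s : Finset K | ∃ k : K, s = {k} ∧ g k ≤ p}) := by
      refine ⟨p, ?_⟩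
      rintro q ⟨s, ⟨k, rfl, hk⟩, rfl⟩
      exact hk
    obtain ⟨t, ht⟩ := hf _ hb
    refine t.finite_toSet.subset ?_
    intro k hk
    have h1 : ({k} : Finset K) ≤ t := ht ⟨k, rfl, hk⟩
    have : ({k} : Finset K) ⊆ t := h1
    simpa using this.trans (le_refl _)
  set Q : Set P := Set.range g with hQdef
  have hQdown : ∀ p : P, {q : P | q ∈ Q ∧ q ≤ p}.Finite := by
    intro p
    refine ((hdown p).image g).subset ?_
    rintro q ⟨⟨k, rfl⟩, hq⟩
    exact ⟨k, hq, rfl⟩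
  -- #Q = κ
  have hQle : #Q ≤ κ := hK ▸ Cardinal.mk_range_le
  have hQge : κ ≤ #Q := by
    by_contra h
    push_neg at h
    have hcover : (Set.univ : Set K) ⊆ ⋃ q : Q, {k : K | g k = (q : P)} := by
      intro k _
      exact Set.mem_iUnion.2 ⟨⟨g k, ⟨k, rfl⟩⟩, rfl⟩
    have hfib : ∀ q : Q, #{k : K | g k = (q : P)} ≤ ℵ₀ := by
      intro q
      obtain ⟨k₀, hk₀⟩ := q.2
      refine le_of_lt (Cardinal.lt_aleph0_iff_set_finite.2 ((hdown (q : P)).subset ?_))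
      intro k hk
      exact le_of_eq hk
    have h1 : κ ≤ #Q * ℵ₀ := by
      calc κ = #K := hK.symm
        _ = #(Set.univ : Set K) := (Cardinal.mk_univ).symm
        _ ≤ #(⋃ q : Q, {k : K | g k = (q : P)}) := Cardinal.mk_le_mk_of_subset hcover
        _ ≤ Cardinal.sum (fun q : Q => #{k : K | g k = (q : P)}) := Cardinal.mk_iUnion_le_sum_mk
        _ ≤ Cardinal.sum (fun _ : Q => ℵ₀) := Cardinal.sum_le_sum _ _ hfib
        _ = #Q * ℵ₀ := Cardinal.sum_const' _ _
    exact absurd h1 (not_le.2 (Cardinal.mul_lt_of_lt hreg.aleph0_le h huncount))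
  have hQ : #Q = κ := le_antisymm hQle hQge
  -- the counting function
  set m : P → ℕ := fun p => {q : P | q ∈ Q ∧ q < p}.ncard with hm
  have hmfin : ∀ p : P, {q : P | q ∈ Q ∧ q < p}.Finite := by
    intro p
    refine (hQdown p).subset ?_
    rintro q ⟨hq, hlt⟩
    exact ⟨hq, hlt.le⟩
  have hmono : ∀ a, a ∈ Q → ∀ b : P, a < b → m a < m b := by
    intro a ha b hab
    refine Set.ncard_lt_ncard ?_ (hmfin b)
    rw [Set.ssubset_def]
    constructor
    · rintro q ⟨hq, hlt⟩
      exact ⟨hq, hlt.trans hab⟩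
    · intro hsub
      exact lt_irrefl a (hsub ⟨ha, hab⟩).2
  -- pigeonhole: some fiber of m on Q has size κ
  have hex : ∃ n : ℕ, κ ≤ #{p : P | p ∈ Q ∧ m p = n} := by
    by_contra h
    push_neg at h
    have hcover : Q ⊆ ⋃ n : ULift.{u} ℕ, {p : P | p ∈ Q ∧ m p = n.down} := by
      intro p hp
      exact Set.mem_iUnion.2 ⟨⟨m p⟩, hp, rfl⟩
    have h1 : κ ≤ Cardinal.sum (fun n : ULift.{u} ℕ => #{p : P | p ∈ Q ∧ m p = n.down}) := by
      calc κ = #Q := hQ.symm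
        _ ≤ #(⋃ n : ULift.{u} ℕ, {p : P | p ∈ Q ∧ m p = n.down}) :=
            Cardinal.mk_le_mk_of_subset hcover
        _ ≤ _ := Cardinal.mk_iUnion_le_sum_mk
    have h2 : Cardinal.sum (fun n : ULift.{u} ℕ => #{p : P | p ∈ Q ∧ m p = n.down}) < κ := by
      refine Cardinal.sum_lt_of_isRegular hreg ?_ (fun n => h n.down)
      simpa using huncount
    exact absurd h1 (not_le.2 h2)
  obtain ⟨n, hn⟩ := hex
  refine ⟨{p : P | p ∈ Q ∧ m p = n}, ?_, ?_⟩
  · refine le_antisymm ?_ hn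
    refine le_trans (Cardinal.mk_le_mk_of_subset ?_) (le_of_eq hQ)
    rintro p ⟨hp, _⟩
    exact hp
  · rintro a ⟨haQ, han⟩ b ⟨hbQ, hbn⟩ hab
    constructor
    · intro hle
      have := hmono a haQ b (lt_of_le_of_ne hle hab)
      omega
    · intro hle
      have := hmono b hbQ a (lt_of_le_of_ne hle (Ne.symm hab))
      omega
end
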